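/- arXiv:2006.16142 — 8 statements merged into one kernel-verified Lean document; each statement's English description precedes it below -/
import Mathlib

section
/- Suppose f is L_f-smooth and convex, Ω ⊆ R^n is a polytope with diameter D, Problem min_{x∈Ω} f(x) has a unique solution x⋆ satisfying strict complementarity with gap δ > 0 and quadratic growth with parameter γ > 0, and k ≥ r⋆ (the number of vertices of the smallest face containing x⋆). Then the kFW algorithm finds x⋆ exactly in at most T + 1 iterations, where T = 4 L_f³ D⁴ / (γ δ²). -/
open scoped RealInnerProductSpace
open Set AffineMap Finset

/-!
The Frank–Wolfe step from `x t` towards the kLOO vertex of smallest gradient inner product is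
feasible for kDS, so the classical recursion gives `f (x t) - f x⋆ ≤ 2 L D² / (t + 1)`. By
quadratic growth, `L ‖x t - x⋆‖ D < δ` once `t ≥ T`; then the Lipschitz gradient preserves the
strict complementarity gap at `x t`, so the `k ≥ r⋆` vertices chosen by kLOO contain the optimal
face, whose hull contains `x⋆`, and the next kDS step lands exactly on `x⋆`.
-/

theorem Finset.exists_forall_le_of_forall_le_of_notMem {α β : Type*} [LinearOrder β]
    {S V : Finset α} {φ : α → β} (hS : S.Nonempty)
    (hmin : ∀ v ∈ S, ∀ u ∈ V, u ∉ S → φ v ≤ φ u) : ∃ v ∈ S, ∀ u ∈ V, φ v ≤ φ u := by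
  obtain ⟨v, hv, hvS⟩ := S.exists_min_image φ hS
  refine ⟨v, hv, fun u hu => ?_⟩
  by_cases huS : u ∈ S
  exacts [hvS u huS, hmin v hv u hu huS]

theorem Finset.subset_of_forall_le_of_forall_lt {α β : Type*} [LinearOrder β]
    {F S V : Finset α} {φ : α → β} (hFV : F ⊆ V) (hSV : S ⊆ V) (hcard : #F ≤ #S)
    (hS : ∀ v ∈ S, ∀ u ∈ V, u ∉ S → φ v ≤ φ u) (hF : ∀ w ∈ F, ∀ u ∈ V, u ∉ F → φ w < φ u) :
    F ⊆ S := by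
  classical
  intro w hw
  by_contra hwS
  obtain ⟨u, huS, hu⟩ := exists_mem_notMem_of_card_lt_card (s := F.erase w) (t := S) (by
    rw [card_erase_of_mem hw]
    have := card_pos.2 ⟨w, hw⟩
    omega)
  have huF : u ∉ F := fun huF => hu (mem_erase.2 ⟨fun h => hwS (h ▸ huS), huF⟩)
  exact (hS u huS w (hFV hw) hwS).not_gt (hF w hw u (hSV huS) huF)

/-- `(L e D)² ≤ 2 L³ D⁴ / (γ (m + 1)) ≤ δ² m / (2 (m + 1)) < δ²`: this is where the iteration
count `T = 4 L³ D⁴ / (γ δ²)` comes from. -/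
theorem mul_mul_lt_of_sq_le_div {L D γ δ e m : ℝ} (hL : 0 ≤ L) (hγ : 0 < γ) (hδ : 0 < δ)
    (hm : 4 * L ^ 3 * D ^ 4 / (γ * δ ^ 2) ≤ m) (he : γ * e ^ 2 ≤ 2 * (L * D ^ 2) / (m + 1)) :
    L * e * D < δ := by
  have hm0 : 0 ≤ m := (by positivity : 0 ≤ 4 * L ^ 3 * D ^ 4 / (γ * δ ^ 2)).trans hm
  rw [div_le_iff₀ (by positivity)] at hm
  rw [le_div_iff₀ (by positivity)] at he
  refine lt_of_pow_lt_pow_left₀ 2 hδ.le (lt_of_mul_lt_mul_left ?_ (by positivity : 0 ≤ γ * (m + 1)))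
  calc γ * (m + 1) * (L * e * D) ^ 2 = L ^ 2 * D ^ 2 * (γ * e ^ 2 * (m + 1)) := by ring
    _ ≤ L ^ 2 * D ^ 2 * (2 * (L * D ^ 2)) := by gcongr
    _ ≤ γ * δ ^ 2 * m / 2 := by linarith
    _ < γ * (m + 1) * δ ^ 2 := by nlinarith [mul_pos hγ (pow_pos hδ 2)]

theorem le_two_mul_div_of_frankWolfe_recursion {h : ℕ → ℝ} {C : ℝ} (hC : 0 ≤ C)
    (hstep : ∀ t, ∀ η ∈ Icc (0 : ℝ) 1, h (t + 1) ≤ (1 - η) * h t + η ^ 2 * C / 2) :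
    ∀ t, 1 ≤ t → h t ≤ 2 * C / (t + 1) := by
  intro t ht
  induction t, ht using Nat.le_induction with
  | base =>
    have := hstep 0 1 ⟨zero_le_one, le_rfl⟩
    norm_num at this ⊢
    linarith
  | succ t _ ih =>
    have hη : 2 / ((t : ℝ) + 2) ∈ Icc (0 : ℝ) 1 :=
      ⟨by positivity, (div_le_one (by positivity)).2 (by linarith [t.cast_nonneg (α := ℝ)])⟩
    have hgap : 2 * C / ((t : ℝ) + 2) - ((1 - 2 / (t + 2)) * (2 * C / (t + 1))
        + (2 / (t + 2)) ^ 2 * C / 2) = 2 * C / ((t + 2) ^ 2 * (t + 1)) := by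
      field_simp
      ring
    calc h (t + 1) ≤ (1 - 2 / (t + 2)) * h t + (2 / (t + 2)) ^ 2 * C / 2 := hstep t _ hη
      _ ≤ (1 - 2 / (t + 2)) * (2 * C / (t + 1)) + (2 / (t + 2)) ^ 2 * C / 2 := by
        gcongr
        linarith [hη.2]
      _ ≤ 2 * C / (t + 2) := by
        linarith [hgap, (by positivity : 0 ≤ 2 * C / (((t : ℝ) + 2) ^ 2 * (t + 1)))]
      _ = 2 * C / ((t + 1 : ℕ) + 1) := by
        push_cast
        ring

section InnerProductSpace

variable {E : Type*} [NormedAddCommGroup E] [InnerProductSpace ℝ E]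

theorem inner_le_inner_of_mem_convexHull {a v y : E} {V : Set E} (hv : ∀ u ∈ V, ⟪a, v⟫ ≤ ⟪a, u⟫)
    (hy : y ∈ convexHull ℝ V) : ⟪a, v⟫ ≤ ⟪a, y⟫ :=
  convexHull_min hv (convex_halfSpace_ge (innerₗ E a).isLinear _) hy

theorem inner_lt_inner_of_norm_sub_mul_norm_sub_lt {a b u w : E} {δ : ℝ}
    (hgap : δ ≤ ⟪b, u⟫ - ⟪b, w⟫) (hclose : ‖a - b‖ * ‖u - w‖ < δ) : ⟪a, w⟫ < ⟪a, u⟫ := by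
  have := real_inner_le_norm (b - a) (u - w)
  rw [norm_sub_rev] at this
  simp only [inner_sub_left, inner_sub_right] at this
  linarith

/-- One kFW iteration `x ↦ x'`: `S` is the output of kLOO at `x`, and `x'` a kDS minimizer over
`conv (S ∪ {x})`. -/
def IsKFWStep (f : E → ℝ) (g : E → E) (V : Finset E) (k : ℕ) (x x' : E) : Prop :=
  ∃ S : Finset E, S ⊆ V ∧ #S = k ∧ (∀ v ∈ S, ∀ u ∈ V, u ∉ S → ⟪g x, v⟫ ≤ ⟪g x, u⟫) ∧
    x' ∈ convexHull ℝ (insert x (S : Set E)) ∧ ∀ y ∈ convexHull ℝ (insert x (S : Set E)), f x' ≤ f y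

theorem IsKFWStep.le_of_mem_convexHull {f : E → ℝ} {g : E → E} {V F : Finset E} {k : ℕ}
    {x x' y : E} (hstep : IsKFWStep f g V k x x') (hFV : F ⊆ V) (hcard : #F ≤ k)
    (hgap : ∀ w ∈ F, ∀ u ∈ V, u ∉ F → ⟪g x, w⟫ < ⟪g x, u⟫) (hy : y ∈ convexHull ℝ (F : Set E)) :
    f x' ≤ f y := by
  obtain ⟨S, hSV, rfl, hS, -, hopt⟩ := hstep
  have hFS := Finset.subset_of_forall_le_of_forall_lt hFV hSV hcard hS hgap
  exact hopt y (convexHull_mono ((coe_subset.2 hFS).trans (subset_insert _ _)) hy)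

variable [CompleteSpace E] {f : E → ℝ}

theorem HasGradientAt.hasDerivAt_comp_lineMap {x y a : E} {t : ℝ}
    (h : HasGradientAt f a (lineMap x y t)) :
    HasDerivAt (f ∘ lineMap (k := ℝ) x y) ⟪a, y - x⟫ t :=
  (h.hasFDerivAt.comp_hasDerivAt t hasDerivAt_lineMap).congr_deriv
    (InnerProductSpace.toDual_apply_apply)

theorem ConvexOn.add_inner_sub_le {s : Set E} (hf : ConvexOn ℝ s f) {x y a : E}
    (hx : x ∈ s) (hy : y ∈ s) (ha : HasGradientAt f a x) :
    f x + ⟪a, y - x⟫ ≤ f y := by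
  have hφ : ConvexOn ℝ (Icc (0 : ℝ) 1) (f ∘ lineMap (k := ℝ) x y) :=
    (hf.comp_affineMap _).subset (hf.1.mapsTo_lineMap hx hy) (convex_Icc 0 1)
  have hd : HasDerivAt (f ∘ lineMap (k := ℝ) x y) ⟪a, y - x⟫ 0 :=
    HasGradientAt.hasDerivAt_comp_lineMap (by rwa [lineMap_apply_zero])
  have := hφ.le_slope_of_hasDerivAt (left_mem_Icc.2 zero_le_one) (right_mem_Icc.2 zero_le_one)
    zero_lt_one hd
  simp only [slope_def_field, Function.comp_apply, lineMap_apply_one, lineMap_apply_zero,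
    sub_zero, div_one] at this
  linarith

theorem le_add_inner_add_of_lipschitz_gradient {g : E → E} {L : ℝ}
    (hgrad : ∀ a, HasGradientAt f (g a) a) (hlip : ∀ a b, ‖g a - g b‖ ≤ L * ‖a - b‖) (x y : E) :
    f y ≤ f x + ⟪g x, y - x⟫ + L / 2 * ‖y - x‖ ^ 2 := by
  have hφ (t : ℝ) : HasDerivAt (f ∘ lineMap (k := ℝ) x y) ⟪g (lineMap x y t), y - x⟫ t :=
    (hgrad _).hasDerivAt_comp_lineMap
  have hB (t : ℝ) : HasDerivAt (fun s => f x + s * ⟪g x, y - x⟫ + L / 2 * s ^ 2 * ‖y - x‖ ^ 2)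
      (⟪g x, y - x⟫ + L * t * ‖y - x‖ ^ 2) t := by
    refine ((((hasDerivAt_id' t).mul_const _).const_add (f x)).add
      (((hasDerivAt_pow 2 t).const_mul (L / 2)).mul_const _)).congr_deriv ?_
    push_cast
    ring
  have key := image_le_of_deriv_right_le_deriv_boundary (a := 0) (b := 1)
    (fun t _ => (hφ t).continuousAt.continuousWithinAt) (fun t _ => (hφ t).hasDerivWithinAt)
    (by simp) (fun t _ => (hB t).continuousAt.continuousWithinAt)
    (fun t _ => (hB t).hasDerivWithinAt) ?_ (right_mem_Icc.2 zero_le_one)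
  · simpa using key
  rintro t ⟨ht0, -⟩
  have hmove : ‖lineMap x y t - x‖ = t * ‖y - x‖ := by
    rw [← dist_eq_norm, dist_lineMap_left, Real.norm_of_nonneg ht0, dist_eq_norm']
  have := calc ⟪g (lineMap x y t) - g x, y - x⟫
      _ ≤ ‖g (lineMap x y t) - g x‖ * ‖y - x‖ := real_inner_le_norm _ _
      _ ≤ L * ‖lineMap x y t - x‖ * ‖y - x‖ := by gcongr; exact hlip _ _
      _ = L * t * ‖y - x‖ ^ 2 := by rw [hmove]; ring
  rw [inner_sub_left] at this
  linarith

theorem frankWolfe_step_le {Ω : Set E} {g : E → E} {L D : ℝ} (hL : 0 ≤ L)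
    (hconv : ConvexOn ℝ Ω f) (hgrad : ∀ a, HasGradientAt f (g a) a)
    (hlip : ∀ a b, ‖g a - g b‖ ≤ L * ‖a - b‖) (hdiam : ∀ a ∈ Ω, ∀ b ∈ Ω, ‖a - b‖ ≤ D)
    {x xs v : E} (hx : x ∈ Ω) (hxs : xs ∈ Ω) (hv : v ∈ Ω) (hvxs : ⟪g x, v⟫ ≤ ⟪g x, xs⟫)
    {η : ℝ} (hη : η ∈ Icc (0 : ℝ) 1) :
    f (lineMap x v η) - f xs ≤ (1 - η) * (f x - f xs) + η ^ 2 * (L * D ^ 2) / 2 := by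
  have hdesc := le_add_inner_add_of_lipschitz_gradient hgrad hlip x (lineMap x v η)
  rw [← vsub_eq_sub, lineMap_vsub_left, vsub_eq_sub, real_inner_smul_right, norm_smul,
    mul_pow, Real.norm_eq_abs, sq_abs] at hdesc
  have hgi := hconv.add_inner_sub_le hx hxs (hgrad x)
  have hdir : ⟪g x, v - x⟫ ≤ f xs - f x := by
    rw [inner_sub_right] at hgi ⊢
    linarith
  have hsq : ‖v - x‖ ^ 2 ≤ D ^ 2 := pow_le_pow_left₀ (norm_nonneg _) (hdiam v hv x hx) 2
  nlinarith [mul_le_mul_of_nonneg_left hdir hη.1,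
    mul_le_mul_of_nonneg_left hsq (by positivity : 0 ≤ L * η ^ 2)]

theorem IsKFWStep.sub_le {g : E → E} {V : Finset E} {k : ℕ} {x x' xs : E} {L D : ℝ}
    (hstep : IsKFWStep f g V k x x') (hk : 0 < k) (hL : 0 ≤ L)
    (hconv : ConvexOn ℝ (convexHull ℝ (V : Set E)) f) (hgrad : ∀ a, HasGradientAt f (g a) a)
    (hlip : ∀ a b, ‖g a - g b‖ ≤ L * ‖a - b‖)
    (hdiam : ∀ a ∈ convexHull ℝ (V : Set E), ∀ b ∈ convexHull ℝ (V : Set E), ‖a - b‖ ≤ D)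
    (hx : x ∈ convexHull ℝ (V : Set E)) (hxs : xs ∈ convexHull ℝ (V : Set E))
    {η : ℝ} (hη : η ∈ Icc (0 : ℝ) 1) :
    f x' - f xs ≤ (1 - η) * (f x - f xs) + η ^ 2 * (L * D ^ 2) / 2 := by
  obtain ⟨S, hSV, rfl, hS, -, hopt⟩ := hstep
  obtain ⟨v, hvS, hv⟩ := Finset.exists_forall_le_of_forall_le_of_notMem (card_pos.1 hk) hS
  have hy : lineMap x v η ∈ convexHull ℝ (insert x (S : Set E)) :=
    (convex_convexHull ℝ _).lineMap_mem (subset_convexHull ℝ _ (mem_insert _ _))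
      (subset_convexHull ℝ _ (mem_insert_of_mem _ hvS)) hη
  have hvxs : ⟪g x, v⟫ ≤ ⟪g x, xs⟫ := inner_le_inner_of_mem_convexHull hv hxs
  have := frankWolfe_step_le hL hconv hgrad hlip hdiam hx hxs
    (subset_convexHull ℝ _ (coe_subset.2 hSV hvS)) hvxs hη
  linarith [hopt _ hy]

end InnerProductSpace

theorem kFW_finite_convergence_polytope_general {n : ℕ}
    (f : EuclideanSpace ℝ (Fin n) → ℝ)
    (g : EuclideanSpace ℝ (Fin n) → EuclideanSpace ℝ (Fin n))
    (Vtx Fv : Finset (EuclideanSpace ℝ (Fin n)))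
    (L D γ δ : ℝ) (k : ℕ)
    (hL : 0 < L) (hD : 0 < D) (hγ : 0 < γ) (hδ : 0 < δ)
    (hFsub : Fv ⊆ Vtx)
    -- the constraint set is the polytope `Ω = conv(Vtx)` with diameter `D`
    (hdiam : ∀ x ∈ convexHull ℝ (Vtx : Set (EuclideanSpace ℝ (Fin n))),
      ∀ y ∈ convexHull ℝ (Vtx : Set (EuclideanSpace ℝ (Fin n))), ‖x - y‖ ≤ D)
    -- `f` is convex and `L`-smooth
    (hconv : ConvexOn ℝ (convexHull ℝ (Vtx : Set (EuclideanSpace ℝ (Fin n)))) f)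
    (hgrad : ∀ x, HasGradientAt f (g x) x)
    (hlip : ∀ x y, ‖g x - g y‖ ≤ L * ‖x - y‖)
    -- `xs` is the unique solution, lying in the face spanned by `Fv`
    (xs : EuclideanSpace ℝ (Fin n))
    (hxsF : xs ∈ convexHull ℝ (Fv : Set (EuclideanSpace ℝ (Fin n))))
    (hmin : ∀ y ∈ convexHull ℝ (Vtx : Set (EuclideanSpace ℝ (Fin n))), f xs ≤ f y)
    (huniq : ∀ y ∈ convexHull ℝ (Vtx : Set (EuclideanSpace ℝ (Fin n))), f y = f xs → y = xs)
    -- optimality on the face and strict complementarity gap `δ`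
    (hopt : ∀ v ∈ Fv, ⟪g xs, v⟫ = ⟪g xs, xs⟫)
    (hgap : ∀ u ∈ Vtx, u ∉ Fv → δ ≤ ⟪g xs, u⟫ - ⟪g xs, xs⟫)
    -- quadratic growth
    (hQG : ∀ x ∈ convexHull ℝ (Vtx : Set (EuclideanSpace ℝ (Fin n))),
      γ * ‖x - xs‖ ^ 2 ≤ f x - f xs)
    -- `k ≥ r⋆`
    (hk : Fv.card ≤ k)
    -- the kFW iterates: kLOO picks the `k` vertices with smallest inner product
    -- with the gradient, and kDS minimizes over their convex hull with `x t`
    (x : ℕ → EuclideanSpace ℝ (Fin n))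
    (hxΩ : ∀ t, x t ∈ convexHull ℝ (Vtx : Set (EuclideanSpace ℝ (Fin n))))
    (hstep : ∀ t : ℕ, ∃ S : Finset (EuclideanSpace ℝ (Fin n)), S ⊆ Vtx ∧ S.card = k ∧
      (∀ v ∈ S, ∀ u ∈ Vtx, u ∉ S → ⟪g (x t), v⟫ ≤ ⟪g (x t), u⟫) ∧
      x (t + 1) ∈ convexHull ℝ (insert (x t) (S : Set (EuclideanSpace ℝ (Fin n)))) ∧
      ∀ y ∈ convexHull ℝ (insert (x t) (S : Set (EuclideanSpace ℝ (Fin n)))),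
        f (x (t + 1)) ≤ f y) :
    ∀ t : ℕ, 4 * L ^ 3 * D ^ 4 / (γ * δ ^ 2) + 1 ≤ (t : ℝ) → x t = xs := by
  have hkfw : ∀ t, IsKFWStep f g Vtx k (x t) (x (t + 1)) := hstep
  have hxsΩ : xs ∈ convexHull ℝ (Vtx : Set (EuclideanSpace ℝ (Fin n))) :=
    convexHull_mono (coe_subset.2 hFsub) hxsF
  have hk0 : 0 < k :=
    (card_pos.2 (coe_nonempty.1 (convexHull_nonempty_iff.1 ⟨xs, hxsF⟩))).trans_le hk
  have hrate := le_two_mul_div_of_frankWolfe_recursion (h := fun t => f (x t) - f xs)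
    (by positivity) fun t _ hη =>
      (hkfw t).sub_le hk0 hL.le hconv hgrad hlip hdiam (hxΩ t) hxsΩ hη
  have hT : 0 < 4 * L ^ 3 * D ^ 4 / (γ * δ ^ 2) := by positivity
  intro t ht
  have ht1 : 1 < t := by exact_mod_cast (show (1 : ℝ) < t by linarith)
  obtain ⟨s, rfl⟩ : ∃ s, t = s + 2 := ⟨t - 2, by omega⟩
  have hclose : L * ‖x (s + 1) - xs‖ * D < δ :=
    mul_mul_lt_of_sq_le_div hL.le hγ hδ (by push_cast at ht ⊢; linarith)
      ((hQG _ (hxΩ _)).trans (hrate (s + 1) (by omega)))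
  have hsep (w) (hw : w ∈ Fv) (u) (hu : u ∈ Vtx) (huF : u ∉ Fv) :
      ⟪g (x (s + 1)), w⟫ < ⟪g (x (s + 1)), u⟫ := by
    refine inner_lt_inner_of_norm_sub_mul_norm_sub_lt (b := g xs)
      (by linarith [hgap u hu huF, hopt w hw]) (lt_of_le_of_lt ?_ hclose)
    exact mul_le_mul (hlip _ _) (hdiam _ (subset_convexHull ℝ _ hu) _
      (subset_convexHull ℝ _ (hFsub hw))) (norm_nonneg _) (by positivity)
  exact huniq _ (hxΩ _) ((hkfw (s + 1)).le_of_mem_convexHull hFsub hk hsep hxsF |>.antisymm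
    (hmin _ (hxΩ _)))

/-- kFW on a polytope: under strict complementarity (gap `δ > 0`), quadratic
growth (parameter `γ`), `L`-smoothness and convexity of `f`, and `k ≥ r⋆` (the
number of vertices of the smallest face `Fv` of `Ω = conv(Vtx)` containing the
unique solution `xs`), the kFW algorithm finds `xs` exactly within
`T + 1 = 4 L³ D⁴ / (γ δ²) + 1` iterations. -/
theorem kFW_finite_convergence_polytope {n : ℕ}
    (f : EuclideanSpace ℝ (Fin n) → ℝ)
    (g : EuclideanSpace ℝ (Fin n) → EuclideanSpace ℝ (Fin n))
    (Vtx Fv : Finset (EuclideanSpace ℝ (Fin n)))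
    (L D γ δ : ℝ) (k : ℕ)
    (hL : 0 < L) (hD : 0 < D) (hγ : 0 < γ) (hδ : 0 < δ)
    (hFsub : Fv ⊆ Vtx)
    -- the constraint set is the polytope `Ω = conv(Vtx)` with diameter `D`
    (hdiam : ∀ x ∈ convexHull ℝ (Vtx : Set (EuclideanSpace ℝ (Fin n))),
      ∀ y ∈ convexHull ℝ (Vtx : Set (EuclideanSpace ℝ (Fin n))), ‖x - y‖ ≤ D)
    -- `f` is convex and `L`-smooth
    (hconv : ConvexOn ℝ (convexHull ℝ (Vtx : Set (EuclideanSpace ℝ (Fin n)))) f)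
    (hgrad : ∀ x, HasGradientAt f (g x) x)
    (hlip : ∀ x y, ‖g x - g y‖ ≤ L * ‖x - y‖)
    -- `xs` is the unique solution, lying in the face spanned by `Fv`
    (xs : EuclideanSpace ℝ (Fin n))
    (hxsF : xs ∈ convexHull ℝ (Fv : Set (EuclideanSpace ℝ (Fin n))))
    (hmin : ∀ y ∈ convexHull ℝ (Vtx : Set (EuclideanSpace ℝ (Fin n))), f xs ≤ f y)
    (huniq : ∀ y ∈ convexHull ℝ (Vtx : Set (EuclideanSpace ℝ (Fin n))), f y = f xs → y = xs)
    -- optimality on the face and strict complementarity gap `δ`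
    (hopt : ∀ v ∈ Fv, ⟪g xs, v⟫ = ⟪g xs, xs⟫)
    (hgap : ∀ u ∈ Vtx, u ∉ Fv → δ ≤ ⟪g xs, u⟫ - ⟪g xs, xs⟫)
    -- quadratic growth
    (hQG : ∀ x ∈ convexHull ℝ (Vtx : Set (EuclideanSpace ℝ (Fin n))),
      γ * ‖x - xs‖ ^ 2 ≤ f x - f xs)
    -- `k ≥ r⋆`
    (hk : Fv.card ≤ k) (hkV : k ≤ Vtx.card)
    -- the kFW iterates: kLOO picks the `k` vertices with smallest inner product
    -- with the gradient, and kDS minimizes over their convex hull with `x t`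
    (x : ℕ → EuclideanSpace ℝ (Fin n))
    (hxΩ : ∀ t, x t ∈ convexHull ℝ (Vtx : Set (EuclideanSpace ℝ (Fin n))))
    (hstep : ∀ t : ℕ, ∃ S : Finset (EuclideanSpace ℝ (Fin n)), S ⊆ Vtx ∧ S.card = k ∧
      (∀ v ∈ S, ∀ u ∈ Vtx, u ∉ S → ⟪g (x t), v⟫ ≤ ⟪g (x t), u⟫) ∧
      x (t + 1) ∈ convexHull ℝ (insert (x t) (S : Set (EuclideanSpace ℝ (Fin n)))) ∧
      ∀ y ∈ convexHull ℝ (insert (x t) (S : Set (EuclideanSpace ℝ (Fin n)))),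
        f (x (t + 1)) ≤ f y) :
    ∀ t : ℕ, 4 * L ^ 3 * D ^ 4 / (γ * δ ^ 2) + 1 ≤ (t : ℝ) → x t = xs :=
  kFW_finite_convergence_polytope_general f g Vtx Fv L D γ δ k hL hD hγ hδ hFsub hdiam hconv hgrad
    hlip xs hxsF hmin huniq hopt hgap hQG hk x hxΩ hstep
end

section
/- Let Ω be a polytope, f smooth with L_f-Lipschitz gradient, x⋆ the unique solution with strict complementarity gap δ > 0. If ‖x_t − x⋆‖ ≤ δ/(2 L_f D), then for every vertex v of the optimal face F(x⋆) and every vertex u not in F(x⋆): ⟨∇f(x_t), v⟩ − ⟨∇f(x_t), u⟩ ≤ −δ/2. Consequently, the k vertices with smallest inner product with ∇f(x_t) include all vertices of F(x⋆) whenever k ≥ r⋆. -/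
open scoped RealInnerProductSpace

/-! Near `x⋆` every face vertex beats every other vertex by at least `δ/2` against `∇f(x_t)`:
at `x⋆` the gap is `δ`, and replacing `∇f(x⋆)` by `∇f(x_t)` moves `⟪∇f, v - u⟫` by at most
`L ‖x_t - x⋆‖ D ≤ δ/2`. A set of at least `r⋆` vertices that are minimal for `∇f(x_t)` and
misses a face vertex must then contain a vertex outside the face, which is strictly worse. -/

theorem inner_le_inner_add_norm_sub_mul_norm {E : Type*} [NormedAddCommGroup E]
    [InnerProductSpace ℝ E] (a b w : E) : ⟪b, w⟫ ≤ ⟪a, w⟫ + ‖b - a‖ * ‖w‖ := by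
  have h := real_inner_le_norm (b - a) w
  rw [inner_sub_left] at h
  linarith

theorem inner_sub_le_neg_half_of_gap {E : Type*} [NormedAddCommGroup E]
    [InnerProductSpace ℝ E] {a b v u : E} {δ : ℝ} (hgap : ⟪a, v⟫ - ⟪a, u⟫ ≤ -δ)
    (hpert : ‖b - a‖ * ‖v - u‖ ≤ δ / 2) : ⟪b, v⟫ - ⟪b, u⟫ ≤ -δ / 2 := by
  have h := inner_le_inner_add_norm_sub_mul_norm a b (v - u)
  rw [inner_sub_right, inner_sub_right] at h
  linarith

theorem Finset.subset_of_card_le_of_forall_lt {α β : Type*} [LinearOrder β] {V F S : Finset α}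
    (φ : α → β) (hFV : F ⊆ V) (hSV : S ⊆ V) (hcard : F.card ≤ S.card)
    (hF : ∀ v ∈ F, ∀ u ∈ V, u ∉ F → φ v < φ u) (hS : ∀ v ∈ S, ∀ u ∈ V, u ∉ S → φ v ≤ φ u) :
    F ⊆ S := by
  classical
  intro v hvF
  by_contra hvS
  obtain ⟨u, huS, huv⟩ := Finset.exists_mem_notMem_of_card_lt_card
    ((Finset.card_erase_lt_of_mem hvF).trans_le hcard)
  have huF : u ∉ F := fun huF => huv (Finset.mem_erase.mpr ⟨by rintro rfl; exact hvS huS, huF⟩)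
  exact (hF v hvF u (hSV huS) huF).not_ge (hS u huS v (hFV hvF) hvS)

theorem kLOO_identifies_face_general {n : ℕ}
    (g : EuclideanSpace ℝ (Fin n) → EuclideanSpace ℝ (Fin n))
    (Vtx Fv : Finset (EuclideanSpace ℝ (Fin n)))
    (L D δ : ℝ)
    (hL : 0 < L) (hD : 0 < D) (hδ : 0 < δ)
    (hFsub : Fv ⊆ Vtx)
    (hdiam : ∀ x ∈ convexHull ℝ (Vtx : Set (EuclideanSpace ℝ (Fin n))),
      ∀ y ∈ convexHull ℝ (Vtx : Set (EuclideanSpace ℝ (Fin n))), ‖x - y‖ ≤ D)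
    (hlip : ∀ x y, ‖g x - g y‖ ≤ L * ‖x - y‖)
    (xs : EuclideanSpace ℝ (Fin n))
    -- optimality on the face and strict complementarity gap `δ`
    (hopt : ∀ v ∈ Fv, ⟪g xs, v⟫ = ⟪g xs, xs⟫)
    (hgap : ∀ u ∈ Vtx, u ∉ Fv → δ ≤ ⟪g xs, u⟫ - ⟪g xs, xs⟫)
    (xt : EuclideanSpace ℝ (Fin n))
    (hclose : ‖xt - xs‖ ≤ δ / (2 * L * D)) :
    (∀ v ∈ Fv, ∀ u ∈ Vtx, u ∉ Fv → ⟪g xt, v⟫ - ⟪g xt, u⟫ ≤ -δ / 2) ∧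
      ∀ S : Finset (EuclideanSpace ℝ (Fin n)), S ⊆ Vtx → Fv.card ≤ S.card →
        (∀ v ∈ S, ∀ u ∈ Vtx, u ∉ S → ⟪g xt, v⟫ ≤ ⟪g xt, u⟫) → Fv ⊆ S := by
  have hpert : ∀ v ∈ Vtx, ∀ u ∈ Vtx, ‖g xt - g xs‖ * ‖v - u‖ ≤ δ / 2 := fun v hv u hu =>
    calc ‖g xt - g xs‖ * ‖v - u‖ ≤ (L * (δ / (2 * L * D))) * D := by
          refine mul_le_mul ((hlip xt xs).trans (by gcongr)) ?_ (norm_nonneg _) (by positivity)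
          exact hdiam v (subset_convexHull ℝ _ hv) u (subset_convexHull ℝ _ hu)
      _ = δ / 2 := by field_simp
  have hface : ∀ v ∈ Fv, ∀ u ∈ Vtx, u ∉ Fv → ⟪g xt, v⟫ - ⟪g xt, u⟫ ≤ -δ / 2 :=
    fun v hv u hu huF => inner_sub_le_neg_half_of_gap
      (by linarith [hopt v hv, hgap u hu huF]) (hpert v (hFsub hv) u hu)
  refine ⟨hface, fun S hSV hcard hS => ?_⟩
  refine Finset.subset_of_card_le_of_forall_lt (fun x => ⟪g xt, x⟫) hFsub hSV hcard ?_ hS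
  intro v hv u hu huF
  linarith [hface v hv u hu huF]

/-- If `‖x_t − x⋆‖ ≤ δ/(2 L D)` then for every vertex `v` of the optimal face
`Fv` and every vertex `u ∉ Fv`, `⟪∇f(x_t), v⟫ − ⟪∇f(x_t), u⟫ ≤ −δ/2`;
consequently any set `S` of `k ≥ r⋆` vertices with smallest inner product with
`∇f(x_t)` contains all vertices of the optimal face. -/
theorem kLOO_identifies_face {n : ℕ}
    (f : EuclideanSpace ℝ (Fin n) → ℝ)
    (g : EuclideanSpace ℝ (Fin n) → EuclideanSpace ℝ (Fin n))
    (Vtx Fv : Finset (EuclideanSpace ℝ (Fin n)))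
    (L D δ : ℝ)
    (hL : 0 < L) (hD : 0 < D) (hδ : 0 < δ)
    (hFsub : Fv ⊆ Vtx)
    (hdiam : ∀ x ∈ convexHull ℝ (Vtx : Set (EuclideanSpace ℝ (Fin n))),
      ∀ y ∈ convexHull ℝ (Vtx : Set (EuclideanSpace ℝ (Fin n))), ‖x - y‖ ≤ D)
    (hgrad : ∀ x, HasGradientAt f (g x) x)
    (hlip : ∀ x y, ‖g x - g y‖ ≤ L * ‖x - y‖)
    (xs : EuclideanSpace ℝ (Fin n))
    (hxsF : xs ∈ convexHull ℝ (Fv : Set (EuclideanSpace ℝ (Fin n))))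
    -- optimality on the face and strict complementarity gap `δ`
    (hopt : ∀ v ∈ Fv, ⟪g xs, v⟫ = ⟪g xs, xs⟫)
    (hgap : ∀ u ∈ Vtx, u ∉ Fv → δ ≤ ⟪g xs, u⟫ - ⟪g xs, xs⟫)
    (xt : EuclideanSpace ℝ (Fin n))
    (hclose : ‖xt - xs‖ ≤ δ / (2 * L * D)) :
    (∀ v ∈ Fv, ∀ u ∈ Vtx, u ∉ Fv → ⟪g xt, v⟫ - ⟪g xt, u⟫ ≤ -δ / 2) ∧
      ∀ S : Finset (EuclideanSpace ℝ (Fin n)), S ⊆ Vtx → Fv.card ≤ S.card →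
        (∀ v ∈ S, ∀ u ∈ Vtx, u ∉ S → ⟪g xt, v⟫ ≤ ⟪g xt, u⟫) → Fv ⊆ S :=
  kLOO_identifies_face_general g Vtx Fv L D δ hL hD hδ hFsub hdiam hlip xs hopt hgap xt hclose
end

section
/- If strict complementarity holds for minimization of a smooth convex f over a polytope Ω (i.e., x⋆ ∈ ∂Ω is the unique solution and −∇f(x⋆) ∈ relint N_Ω(x⋆)), then the gap δ = min{⟨u − x⋆, ∇f(x⋆)⟩ : u a vertex of Ω not in the minimal face F(x⋆)} is strictly positive; moreover ⟨∇f(x⋆), v⟩ = ⟨∇f(x⋆), x⋆⟩ for every vertex v of F(x⋆). -/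
/-!
Both claims rest on one fact: an affine function attaining its maximum over a set at a point of
the set's relative interior is constant on the set, because the segment from any point of the set
through the maximizer extends a little beyond it inside the set. Applied to `x ↦ ⟪-∇f(x⋆), x⟫` on
the face `F(x⋆)`, whose relative interior contains `x⋆`, it gives the equality on the vertices of
`F(x⋆)`. Applied to `y ↦ ⟪y, u - x⋆⟫`, which is `≤ 0` on the normal cone, it shows that if this
vanished at the relative interior point `-∇f(x⋆)` it would vanish at the face normal `a` as well,
contradicting `⟪a, u⟫ < ⟪a, x⋆⟫` for a vertex `u` off the face.
-/

open scoped RealInnerProductSpace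
open Filter Topology AffineMap

section

variable {V : Type*} [AddCommGroup V] [Module ℝ V] [TopologicalSpace V]
  [IsTopologicalAddGroup V] [ContinuousSMul ℝ V]

theorem exists_one_lt_lineMap_mem_of_mem_intrinsicInterior {C : Set V} {a z : V}
    (hz : z ∈ intrinsicInterior ℝ C) (ha : a ∈ C) :
    ∃ t : ℝ, 1 < t ∧ lineMap a z t ∈ C := by
  obtain ⟨z, hz, rfl⟩ := hz
  have hline (t : ℝ) : lineMap a (z : V) t ∈ affineSpan ℝ C :=
    lineMap_mem t (subset_affineSpan ℝ C ha) z.2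
  have hcont : Continuous fun t : ℝ ↦ (⟨lineMap a (z : V) t, hline t⟩ : affineSpan ℝ C) :=
    lineMap_continuous.subtype_mk _
  have hnear : ∀ᶠ t in 𝓝[>] (1 : ℝ), lineMap a (z : V) t ∈ C := by
    have hz1 : (⟨lineMap a (z : V) (1 : ℝ), hline 1⟩ : affineSpan ℝ C) = z := by simp
    exact nhdsWithin_le_nhds
      (hcont.continuousAt.preimage_mem_nhds (hz1 ▸ mem_interior_iff_mem_nhds.1 hz))
  exact (hnear.and self_mem_nhdsWithin).exists.imp fun _ ht ↦ ⟨ht.2, ht.1⟩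

theorem AffineMap.eq_of_isMaxOn_of_mem_intrinsicInterior (φ : V →ᵃ[ℝ] ℝ) {C : Set V} {a z : V}
    (hz : z ∈ intrinsicInterior ℝ C) (ha : a ∈ C) (hmax : IsMaxOn φ C z) : φ a = φ z := by
  obtain ⟨t, ht, hmem⟩ := exists_one_lt_lineMap_mem_of_mem_intrinsicInterior hz ha
  have hbeyond : φ (lineMap a z t) ≤ φ z := hmax hmem
  have hle : φ a ≤ φ z := hmax ha
  rw [φ.apply_lineMap, lineMap_apply_module, smul_eq_mul, smul_eq_mul] at hbeyond
  nlinarith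

end

theorem strict_complementarity_gap_polytope_general {n : ℕ}
    (g : EuclideanSpace ℝ (Fin n) → EuclideanSpace ℝ (Fin n))
    (Vtx Fv : Finset (EuclideanSpace ℝ (Fin n)))
    (hFsub : Fv ⊆ Vtx)
    (xs : EuclideanSpace ℝ (Fin n))
    -- `Fv` spans the minimal face containing `x⋆`: `x⋆` is in its relative
    -- interior, the remaining vertices are off this face, and the face admits a
    -- face-defining inequality
    (hxsF : xs ∈ intrinsicInterior ℝ (convexHull ℝ (Fv : Set (EuclideanSpace ℝ (Fin n)))))
    (hface : ∃ (a : EuclideanSpace ℝ (Fin n)) (b : ℝ),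
      (∀ v ∈ Fv, ⟪a, v⟫ = b) ∧ (∀ u ∈ Vtx, u ∉ Fv → ⟪a, u⟫ < b) ∧
      ∀ x ∈ convexHull ℝ (Vtx : Set (EuclideanSpace ℝ (Fin n))), ⟪a, x⟫ ≤ b)
    -- strict complementarity: `−∇f(x⋆) ∈ relint N_Ω(x⋆)`
    (hsc : -g xs ∈ intrinsicInterior ℝ
      {y : EuclideanSpace ℝ (Fin n) |
        ∀ x ∈ convexHull ℝ (Vtx : Set (EuclideanSpace ℝ (Fin n))), ⟪y, x⟫ ≤ ⟪y, xs⟫}) :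
    (∀ u ∈ Vtx, u ∉ Fv → 0 < ⟪g xs, u⟫ - ⟪g xs, xs⟫) ∧
      ∀ v ∈ Fv, ⟪g xs, v⟫ = ⟪g xs, xs⟫ := by
  set Ω := convexHull ℝ (Vtx : Set (EuclideanSpace ℝ (Fin n)))
  obtain ⟨a, b, haF, haU, haΩ⟩ := hface
  have hxsΩ : IsMaxOn (fun x ↦ ⟪-g xs, x⟫) Ω xs := fun x hx ↦
    intrinsicInterior_subset hsc x hx
  have hFΩ : convexHull ℝ (Fv : Set (EuclideanSpace ℝ (Fin n))) ⊆ Ω :=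
    convexHull_mono (by exact_mod_cast hFsub)
  have haxs : ⟪a, xs⟫ = b :=
    convexHull_min haF (convex_hyperplane (innerₗ _ a).isLinear b)
      (intrinsicInterior_subset hxsF)
  refine ⟨fun u hu huF ↦ ?_, fun v hv ↦ ?_⟩
  · have hle : ⟪g xs, xs⟫ ≤ ⟪g xs, u⟫ := by
      simpa using hxsΩ (subset_convexHull ℝ _ hu)
    refine sub_pos.2 (hle.lt_of_ne fun heq ↦ (haU u hu huF).ne ?_)
    have haN : ⟪a, u - xs⟫ = ⟪-g xs, u - xs⟫ :=
      ((innerₗ _).flip (u - xs)).toAffineMap.eq_of_isMaxOn_of_mem_intrinsicInterior hsc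
        (fun x hx ↦ haxs ▸ haΩ x hx) fun y hy ↦ by
          change ⟪y, u - xs⟫ ≤ ⟪-g xs, u - xs⟫
          rw [inner_sub_right, inner_sub_right, inner_neg_left, inner_neg_left, heq]
          linarith [hy u (subset_convexHull ℝ _ hu)]
    rw [inner_sub_right, inner_sub_right, inner_neg_left, inner_neg_left] at haN
    linarith
  · have hvxs := (innerₗ _ (-g xs)).toAffineMap.eq_of_isMaxOn_of_mem_intrinsicInterior hxsF
      (subset_convexHull ℝ _ hv) fun x hx ↦ by simpa using hxsΩ (hFΩ hx)
    simpa using hvxs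

/-- Strict complementarity implies a positive gap on a polytope: if `x⋆ ∈ ∂Ω`
is the unique minimizer of a smooth convex `f` over the polytope `Ω = conv(Vtx)`
and `−∇f(x⋆)` lies in the relative interior of the normal cone `N_Ω(x⋆)`, then
`⟪∇f(x⋆), u − x⋆⟫ > 0` for every vertex `u` not on the minimal face `F(x⋆)`
(so the gap `δ` is strictly positive), and `⟪∇f(x⋆), v⟫ = ⟪∇f(x⋆), x⋆⟫` for
every vertex `v` of `F(x⋆)`. -/
theorem strict_complementarity_gap_polytope {n : ℕ}
    (f : EuclideanSpace ℝ (Fin n) → ℝ)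
    (g : EuclideanSpace ℝ (Fin n) → EuclideanSpace ℝ (Fin n))
    (Vtx Fv : Finset (EuclideanSpace ℝ (Fin n)))
    (hFsub : Fv ⊆ Vtx)
    (hgrad : ∀ x, HasGradientAt f (g x) x)
    (hconv : ConvexOn ℝ (convexHull ℝ (Vtx : Set (EuclideanSpace ℝ (Fin n)))) f)
    (xs : EuclideanSpace ℝ (Fin n))
    (hmin : ∀ y ∈ convexHull ℝ (Vtx : Set (EuclideanSpace ℝ (Fin n))), f xs ≤ f y)
    (huniq : ∀ y ∈ convexHull ℝ (Vtx : Set (EuclideanSpace ℝ (Fin n))), f y = f xs → y = xs)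
    -- `x⋆` is on the boundary of `Ω`
    (hbd : xs ∈ frontier (convexHull ℝ (Vtx : Set (EuclideanSpace ℝ (Fin n)))))
    -- `Fv` spans the minimal face containing `x⋆`: `x⋆` is in its relative
    -- interior, the remaining vertices are off this face, and the face admits a
    -- face-defining inequality
    (hxsF : xs ∈ intrinsicInterior ℝ (convexHull ℝ (Fv : Set (EuclideanSpace ℝ (Fin n)))))
    (hnotin : ∀ u ∈ Vtx, u ∉ Fv → u ∉ convexHull ℝ (Fv : Set (EuclideanSpace ℝ (Fin n))))
    (hface : ∃ (a : EuclideanSpace ℝ (Fin n)) (b : ℝ),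
      (∀ v ∈ Fv, ⟪a, v⟫ = b) ∧ (∀ u ∈ Vtx, u ∉ Fv → ⟪a, u⟫ < b) ∧
      ∀ x ∈ convexHull ℝ (Vtx : Set (EuclideanSpace ℝ (Fin n))), ⟪a, x⟫ ≤ b)
    -- strict complementarity: `−∇f(x⋆) ∈ relint N_Ω(x⋆)`
    (hsc : -g xs ∈ intrinsicInterior ℝ
      {y : EuclideanSpace ℝ (Fin n) |
        ∀ x ∈ convexHull ℝ (Vtx : Set (EuclideanSpace ℝ (Fin n))), ⟪y, x⟫ ≤ ⟪y, xs⟫}) :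
    (∀ u ∈ Vtx, u ∉ Fv → 0 < ⟪g xs, u⟫ - ⟪g xs, xs⟫) ∧
      ∀ v ∈ Fv, ⟪g xs, v⟫ = ⟪g xs, xs⟫ :=
  strict_complementarity_gap_polytope_general g Vtx Fv hFsub xs hxsF hface hsc
end

section
/- Let Ω = {x ∈ R^n : ‖x‖_G := Σ_{g∈G} ‖x_g‖₂ ≤ 1} be the unit group norm ball for a partition G of {1,…,n}. If −∇f(x⋆) ∈ relint N_Ω(x⋆) with x⋆ ∈ ∂Ω, and the groups are ordered so that ‖[∇f(x⋆)]_{g₁}‖₂ ≥ … ≥ ‖[∇f(x⋆)]_{g_{|G|}}‖₂ with support size r⋆ = #{g : (x⋆)_g ≠ 0}, then ‖[∇f(x⋆)]_{g_i}‖₂ are all equal for i = 1,…,r⋆, and δ := ‖[∇f(x⋆)]_{g_{r⋆}}‖₂ − ‖[∇f(x⋆)]_{g_{r⋆+1}}‖₂ > 0. -/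
open scoped RealInnerProductSpace
open Filter Function Topology Finset

/-!
The dual of the group lasso norm `‖x‖_G = ∑ g, ‖x_g‖₂` is `y ↦ M := max g, ‖y_g‖₂`, so for `y`
in the normal cone at a point `x⋆` with `‖x⋆‖_G = 1` we get `⟪y, x⋆⟫ = M`, and the blockwise
Cauchy–Schwarz inequality then forces `‖y_g‖₂ = M` on every block in the support of `x⋆`.

Relative interiority does the rest. A point `y` of the relative interior of a set `N` can be
pushed past itself away from any `z ∈ N`: `y + s • (y - z) ∈ N` for some `s > 0`. If a block `k`
outside the support had `‖y_k‖₂ = M`, then `y` with block `k` deleted would still lie in the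
normal cone, hence so would `y + s • y_k`, which fails against the test point `y_k / M`. The same
argument with `z` the subgradient of `‖·‖_G` at `x⋆` rules out `y = 0`, i.e. shows `M > 0`.
-/

noncomputable section

theorem exists_pos_add_smul_sub_mem_of_mem_intrinsicInterior {E : Type*}
    [NormedAddCommGroup E] [NormedSpace ℝ E] {N : Set E} {y z : E}
    (hy : y ∈ intrinsicInterior ℝ N) (hz : z ∈ N) :
    ∃ s : ℝ, 0 < s ∧ y + s • (y - z) ∈ N := by
  obtain ⟨p, hp, rfl⟩ := hy
  let γ : ℝ → affineSpan ℝ N := fun s =>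
    ⟨AffineMap.lineMap z (p : E) (1 + s),
      AffineMap.lineMap_mem _ (subset_affineSpan ℝ N hz) p.2⟩
  have hγ : Continuous γ := by
    refine Continuous.subtype_mk ?_ _
    simp only [AffineMap.lineMap_apply_module]
    fun_prop
  have hγ0 : γ 0 = p := by ext; simp [γ]
  have hnear : ∀ᶠ s in 𝓝[>] (0 : ℝ), 0 < s ∧ γ s ∈ interior ((↑) ⁻¹' N) :=
    (eventually_mem_nhdsWithin (a := 0) (s := Set.Ioi 0)).and <| nhdsWithin_le_nhds <|
      hγ.continuousAt.preimage_mem_nhds (hγ0 ▸ isOpen_interior.mem_nhds hp)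
  obtain ⟨s, hs, hsN⟩ := hnear.exists
  refine ⟨s, hs, ?_⟩
  have hγs : (γ s : E) = p + s • (p - z) := by
    simp only [γ, AffineMap.lineMap_apply_module]
    module
  rw [← hγs]
  exact (interior_subset hsN : γ s ∈ (↑) ⁻¹' N)

variable {ι κ : Type*} [DecidableEq ι]

def restrictTo (s : Finset ι) : EuclideanSpace ℝ ι →ₗ[ℝ] EuclideanSpace ℝ ι where
  toFun x := WithLp.toLp 2 fun j => if j ∈ s then x j else 0
  map_add' x y := by ext j; by_cases h : j ∈ s <;> simp [h]
  map_smul' c x := by ext j; by_cases h : j ∈ s <;> simp [h]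

@[simp]
theorem restrictTo_apply (s : Finset ι) (x : EuclideanSpace ℝ ι) (j : ι) :
    restrictTo s x j = if j ∈ s then x j else 0 := rfl

theorem restrictTo_restrictTo_self (s : Finset ι) (x : EuclideanSpace ℝ ι) :
    restrictTo s (restrictTo s x) = restrictTo s x := by
  ext j; by_cases h : j ∈ s <;> simp [h]

theorem restrictTo_restrictTo_of_disjoint {s t : Finset ι} (h : Disjoint s t)
    (x : EuclideanSpace ℝ ι) : restrictTo s (restrictTo t x) = 0 := by
  ext j
  by_cases hs : j ∈ s
  · simp [hs, Finset.disjoint_left.1 h hs]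
  · simp [hs]

theorem restrictTo_eq_zero_iff {s : Finset ι} {x : EuclideanSpace ℝ ι} :
    restrictTo s x = 0 ↔ ∀ j ∈ s, x j = 0 := by
  refine ⟨fun h j hj => by simpa [hj] using congr($h j), fun h => ?_⟩
  ext j
  by_cases hj : j ∈ s <;> simp [hj, h]

theorem sum_restrictTo_of_partition [Fintype κ] {G : κ → Finset ι}
    (hdisj : Pairwise (Disjoint on G))
    (hcover : ∀ j, ∃ i, j ∈ G i) (x : EuclideanSpace ℝ ι) :
    ∑ i, restrictTo (G i) x = x := by
  ext j
  obtain ⟨k, hk⟩ := hcover j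
  rw [WithLp.ofLp_sum, Finset.sum_apply, Finset.sum_eq_single k]
  · simp [hk]
  · intro i _ hik
    simp [Finset.disjoint_left.1 (hdisj hik.symm) hk]
  · simp

variable [Fintype ι]

theorem inner_restrictTo_right (s : Finset ι) (x y : EuclideanSpace ℝ ι) :
    ⟪x, restrictTo s y⟫ = ∑ j ∈ s, x j * y j := by
  simp [PiLp.inner_apply, mul_comm, Finset.sum_ite_mem]

theorem inner_restrictTo_left (s : Finset ι) (x y : EuclideanSpace ℝ ι) :
    ⟪restrictTo s x, y⟫ = ⟪x, restrictTo s y⟫ := by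
  rw [real_inner_comm, inner_restrictTo_right, inner_restrictTo_right]
  simp [mul_comm]

theorem inner_restrictTo_restrictTo (s : Finset ι) (x y : EuclideanSpace ℝ ι) :
    ⟪restrictTo s x, restrictTo s y⟫ = ⟪x, restrictTo s y⟫ := by
  rw [inner_restrictTo_left, restrictTo_restrictTo_self]

theorem norm_restrictTo (s : Finset ι) (x : EuclideanSpace ℝ ι) :
    ‖restrictTo s x‖ = √(∑ j ∈ s, x j ^ 2) := by
  simp [EuclideanSpace.norm_eq, Finset.sum_ite_mem]

theorem inner_restrictTo_self (s : Finset ι) (x : EuclideanSpace ℝ ι) :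
    ⟪x, restrictTo s x⟫ = ‖restrictTo s x‖ ^ 2 := by
  rw [← real_inner_self_eq_norm_sq, inner_restrictTo_left, restrictTo_restrictTo_self]

theorem inner_inv_norm_smul_restrictTo (s : Finset ι) (y : EuclideanSpace ℝ ι) :
    ⟪y, ‖restrictTo s y‖⁻¹ • restrictTo s y⟫ = ‖restrictTo s y‖ := by
  rw [real_inner_smul_right, inner_restrictTo_self]
  field_simp

section NormalCone

variable {E : Type*} [NormedAddCommGroup E] [InnerProductSpace ℝ E]

def normalCone (s : Set E) (x : E) : Set E :=
  {y | ∀ z ∈ s, ⟪y, z⟫ ≤ ⟪y, x⟫}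

variable {s : Set E} {x y : E}

theorem inner_eq_of_mem_normalCone {M : ℝ} (hM : IsGreatest ((⟪y, ·⟫) '' s) M) (hx : x ∈ s)
    (hy : y ∈ normalCone s x) : ⟪y, x⟫ = M := by
  obtain ⟨⟨z, hz, rfl⟩, hle⟩ := hM
  exact le_antisymm (hle ⟨x, hx, rfl⟩) (hy z hz)

theorem zero_notMem_intrinsicInterior_normalCone (h0 : 0 ∈ s) (hy : y ∈ normalCone s x)
    (hyx : ⟪y, x⟫ ≠ 0) : (0 : E) ∉ intrinsicInterior ℝ (normalCone s x) := by
  intro h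
  obtain ⟨t, ht, hmem⟩ := exists_pos_add_smul_sub_mem_of_mem_intrinsicInterior h hy
  have hpos : 0 ≤ ⟪y, x⟫ := by simpa using hy 0 h0
  have hneg : ⟪y, x⟫ ≤ 0 := by
    have := hmem 0 h0
    simp only [zero_add, zero_sub, inner_zero_right, real_inner_smul_left, inner_neg_left] at this
    nlinarith
  exact hyx (le_antisymm hneg hpos)

end NormalCone

variable [Fintype κ]

def groupLassoNorm (G : κ → Finset ι) (x : EuclideanSpace ℝ ι) : ℝ :=
  ∑ i, ‖restrictTo (G i) x‖

def groupLassoBall (G : κ → Finset ι) : Set (EuclideanSpace ℝ ι) :=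
  {x | groupLassoNorm G x ≤ 1}

-- Blocks on which `x` vanishes contribute `0`, because `0⁻¹ = 0`.
def groupLassoSubgradient (G : κ → Finset ι) (x : EuclideanSpace ℝ ι) : EuclideanSpace ℝ ι :=
  ∑ i, ‖restrictTo (G i) x‖⁻¹ • restrictTo (G i) x

variable {G : κ → Finset ι}

theorem groupLassoNorm_eq_sum_sqrt (x : EuclideanSpace ℝ ι) :
    groupLassoNorm G x = ∑ i, √(∑ j ∈ G i, x j ^ 2) := by
  simp only [groupLassoNorm, norm_restrictTo]

theorem continuous_groupLassoNorm : Continuous (groupLassoNorm G) :=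
  continuous_finsetSum _ fun i _ =>
    (LinearMap.continuous_of_finiteDimensional (restrictTo (G i))).norm

theorem groupLassoNorm_smul (c : ℝ) (x : EuclideanSpace ℝ ι) :
    groupLassoNorm G (c • x) = |c| * groupLassoNorm G x := by
  simp [groupLassoNorm, norm_smul, Finset.mul_sum]

theorem groupLassoNorm_restrictTo (hdisj : Pairwise (Disjoint on G)) (k : κ)
    (x : EuclideanSpace ℝ ι) : groupLassoNorm G (restrictTo (G k) x) = ‖restrictTo (G k) x‖ := by
  rw [groupLassoNorm, Finset.sum_eq_single k, restrictTo_restrictTo_self]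
  · intro i _ hik
    rw [restrictTo_restrictTo_of_disjoint (hdisj hik), norm_zero]
  · simp

theorem inner_le_sum_norm_restrictTo_mul (hdisj : Pairwise (Disjoint on G))
    (hcover : ∀ j, ∃ i, j ∈ G i) (y x : EuclideanSpace ℝ ι) :
    ⟪y, x⟫ ≤ ∑ i, ‖restrictTo (G i) y‖ * ‖restrictTo (G i) x‖ := by
  calc ⟪y, x⟫ = ∑ i, ⟪y, restrictTo (G i) x⟫ := by
        rw [← inner_sum, sum_restrictTo_of_partition hdisj hcover]
    _ ≤ _ := by
      gcongr with i
      rw [← inner_restrictTo_restrictTo]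
      exact real_inner_le_norm _ _

theorem inner_le_mul_groupLassoNorm (hdisj : Pairwise (Disjoint on G))
    (hcover : ∀ j, ∃ i, j ∈ G i) {y : EuclideanSpace ℝ ι} {M : ℝ}
    (hM : ∀ i, ‖restrictTo (G i) y‖ ≤ M) (x : EuclideanSpace ℝ ι) :
    ⟪y, x⟫ ≤ M * groupLassoNorm G x := by
  rw [groupLassoNorm, Finset.mul_sum]
  refine (inner_le_sum_norm_restrictTo_mul hdisj hcover y x).trans ?_
  gcongr with i
  exact hM i

theorem inv_norm_smul_restrictTo_mem_groupLassoBall (hdisj : Pairwise (Disjoint on G)) (k : κ)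
    (y : EuclideanSpace ℝ ι) :
    ‖restrictTo (G k) y‖⁻¹ • restrictTo (G k) y ∈ groupLassoBall G := by
  rw [groupLassoBall, Set.mem_ofPred_eq, groupLassoNorm_smul, groupLassoNorm_restrictTo hdisj, abs_inv,
    abs_norm]
  exact inv_mul_le_one_of_le₀ le_rfl (norm_nonneg _)

theorem isGreatest_inner_groupLassoBall (hdisj : Pairwise (Disjoint on G))
    (hcover : ∀ j, ∃ i, j ∈ G i) {y : EuclideanSpace ℝ ι} {M : ℝ}
    (hM : IsGreatest (Set.range fun i => ‖restrictTo (G i) y‖) M) :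
    IsGreatest ((⟪y, ·⟫) '' groupLassoBall G) M := by
  obtain ⟨⟨k, rfl⟩, hle⟩ := hM
  refine ⟨⟨_, inv_norm_smul_restrictTo_mem_groupLassoBall hdisj k y,
    inner_inv_norm_smul_restrictTo (G k) y⟩, ?_⟩
  rintro _ ⟨x, hx, rfl⟩
  calc ⟪y, x⟫ ≤ ‖restrictTo (G k) y‖ * groupLassoNorm G x :=
        inner_le_mul_groupLassoNorm hdisj hcover (Set.forall_mem_range.1 hle) x
    _ ≤ ‖restrictTo (G k) y‖ := mul_le_of_le_one_right (norm_nonneg _) hx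

theorem restrictTo_groupLassoSubgradient (hdisj : Pairwise (Disjoint on G)) (k : κ)
    (x : EuclideanSpace ℝ ι) :
    restrictTo (G k) (groupLassoSubgradient G x) = ‖restrictTo (G k) x‖⁻¹ • restrictTo (G k) x := by
  rw [groupLassoSubgradient, map_sum, Finset.sum_eq_single k]
  · rw [map_smul, restrictTo_restrictTo_self]
  · intro i _ hik
    rw [map_smul, restrictTo_restrictTo_of_disjoint (hdisj hik.symm), smul_zero]
  · simp

theorem inner_groupLassoSubgradient_self (x : EuclideanSpace ℝ ι) :
    ⟪groupLassoSubgradient G x, x⟫ = groupLassoNorm G x := by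
  rw [groupLassoSubgradient, sum_inner, groupLassoNorm]
  refine Finset.sum_congr rfl fun i _ => ?_
  rw [real_inner_smul_left, real_inner_comm, inner_restrictTo_self]
  field_simp

theorem groupLassoSubgradient_mem_normalCone (hdisj : Pairwise (Disjoint on G))
    (hcover : ∀ j, ∃ i, j ∈ G i) {x : EuclideanSpace ℝ ι} (hx : groupLassoNorm G x = 1) :
    groupLassoSubgradient G x ∈ normalCone (groupLassoBall G) x := by
  intro z hz
  have hle : ∀ i, ‖restrictTo (G i) (groupLassoSubgradient G x)‖ ≤ 1 := fun i => by
    rw [restrictTo_groupLassoSubgradient hdisj, norm_smul, norm_inv, norm_norm]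
    exact inv_mul_le_one_of_le₀ le_rfl (norm_nonneg _)
  calc ⟪groupLassoSubgradient G x, z⟫ ≤ 1 * groupLassoNorm G z := inner_le_mul_groupLassoNorm hdisj hcover hle z
    _ ≤ 1 := by rw [one_mul]; exact hz
    _ = _ := by rw [inner_groupLassoSubgradient_self, hx]

section Complementarity

variable {x y : EuclideanSpace ℝ ι} {M : ℝ}

theorem pos_of_mem_intrinsicInterior_normalCone (hdisj : Pairwise (Disjoint on G))
    (hcover : ∀ j, ∃ i, j ∈ G i) (hx : groupLassoNorm G x = 1)
    (hy : y ∈ intrinsicInterior ℝ (normalCone (groupLassoBall G) x))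
    (hM : IsGreatest (Set.range fun i => ‖restrictTo (G i) y‖) M) : 0 < M := by
  by_contra! hM0
  have hy0 : y = 0 := by
    rw [← sum_restrictTo_of_partition hdisj hcover y]
    exact Finset.sum_eq_zero fun i _ => norm_le_zero_iff.1 ((hM.2 ⟨i, rfl⟩).trans hM0)
  refine zero_notMem_intrinsicInterior_normalCone ?_
    (groupLassoSubgradient_mem_normalCone hdisj hcover hx) ?_ (hy0 ▸ hy)
  · simp [groupLassoBall, groupLassoNorm]
  · rw [inner_groupLassoSubgradient_self, hx]
    exact one_ne_zero

theorem norm_restrictTo_eq_of_restrictTo_ne_zero (hdisj : Pairwise (Disjoint on G))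
    (hcover : ∀ j, ∃ i, j ∈ G i) (hx : groupLassoNorm G x = 1)
    (hy : y ∈ normalCone (groupLassoBall G) x)
    (hM : IsGreatest (Set.range fun i => ‖restrictTo (G i) y‖) M) {k : κ}
    (hk : restrictTo (G k) x ≠ 0) : ‖restrictTo (G k) y‖ = M := by
  have hle : ∀ i, ‖restrictTo (G i) y‖ ≤ M := Set.forall_mem_range.1 hM.2
  refine (hle k).antisymm (not_lt.1 fun hlt => ?_)
  have hyx : ⟪y, x⟫ = M :=
    inner_eq_of_mem_normalCone (isGreatest_inner_groupLassoBall hdisj hcover hM) hx.le hy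
  have hsum : ∑ i, ‖restrictTo (G i) y‖ * ‖restrictTo (G i) x‖ < ∑ i, M * ‖restrictTo (G i) x‖ :=
    Finset.sum_lt_sum (fun i _ => by gcongr; exact hle i)
      ⟨k, mem_univ k, mul_lt_mul_of_pos_right hlt (norm_pos_iff.2 hk)⟩
  rw [← Finset.mul_sum, ← groupLassoNorm, hx, mul_one] at hsum
  linarith [inner_le_sum_norm_restrictTo_mul hdisj hcover y x]

theorem norm_restrictTo_lt_of_restrictTo_eq_zero (hdisj : Pairwise (Disjoint on G))
    (hcover : ∀ j, ∃ i, j ∈ G i) (hx : groupLassoNorm G x = 1)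
    (hy : y ∈ intrinsicInterior ℝ (normalCone (groupLassoBall G) x))
    (hM : IsGreatest (Set.range fun i => ‖restrictTo (G i) y‖) M) {k : κ}
    (hk : restrictTo (G k) x = 0) : ‖restrictTo (G k) y‖ < M := by
  have hle : ∀ i, ‖restrictTo (G i) y‖ ≤ M := Set.forall_mem_range.1 hM.2
  have hM0 : 0 < M := pos_of_mem_intrinsicInterior_normalCone hdisj hcover hx hy hM
  refine (hle k).lt_of_ne fun hkM => ?_
  set u := restrictTo (G k) y
  have hyx : ⟪y, x⟫ = M := inner_eq_of_mem_normalCone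
    (isGreatest_inner_groupLassoBall hdisj hcover hM) hx.le (intrinsicInterior_subset hy)
  have hux : ⟪u, x⟫ = 0 := by rw [inner_restrictTo_left, hk, inner_zero_right]
  have hsub : y - u ∈ normalCone (groupLassoBall G) x := by
    intro z hz
    have hle' : ∀ i, ‖restrictTo (G i) (y - u)‖ ≤ M := fun i => by
      rcases eq_or_ne i k with rfl | hik
      · simp [u, restrictTo_restrictTo_self, hM0.le]
      · rw [map_sub, restrictTo_restrictTo_of_disjoint (hdisj hik), sub_zero]
        exact hle i
    calc ⟪y - u, z⟫ ≤ M * groupLassoNorm G z := inner_le_mul_groupLassoNorm hdisj hcover hle' z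
      _ ≤ M := mul_le_of_le_one_right hM0.le hz
      _ = ⟪y - u, x⟫ := by rw [inner_sub_left, hyx, hux, sub_zero]
  obtain ⟨s, hs, hmem⟩ := exists_pos_add_smul_sub_mem_of_mem_intrinsicInterior hy hsub
  rw [sub_sub_cancel] at hmem
  have htest := hmem _ (inv_norm_smul_restrictTo_mem_groupLassoBall hdisj k y)
  have huu : ⟪u, ‖u‖⁻¹ • u⟫ = ‖u‖ := by
    rw [real_inner_smul_right, real_inner_self_eq_norm_sq]
    field_simp
  rw [inner_add_left, inner_add_left, real_inner_smul_left, real_inner_smul_left,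
    inner_inv_norm_smul_restrictTo, huu, hux, hyx, hkM] at htest
  nlinarith

end Complementarity

section Sorted

variable {α : Type*} {l : ℕ} {b : Fin l → α} {S : Finset (Fin l)} {M : α}

theorem Antitone.eq_of_lt_card [PartialOrder α] (hb : Antitone b) (hle : ∀ i, b i ≤ M)
    (hS : ∀ i ∈ S, b i = M) {i : Fin l} (hi : (i : ℕ) < #S) : b i = M := by
  obtain ⟨j, hjS, hij⟩ : ∃ j ∈ S, i ≤ j := by
    by_contra! h
    have := card_le_card fun j hj => mem_Iio.2 (h j hj)
    rw [Fin.card_Iio] at this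
    omega
  exact (hle i).antisymm (hS j hjS ▸ hb hij)

theorem Antitone.lt_of_card_le [Preorder α] (hb : Antitone b) (hS : ∀ i ∉ S, b i < M)
    {i : Fin l} (hi : #S ≤ (i : ℕ)) : b i < M := by
  obtain ⟨j, hji, hjS⟩ : ∃ j ≤ i, j ∉ S := by
    by_contra! h
    have := card_le_card fun j hj => h j (mem_Iic.1 hj)
    rw [Fin.card_Iic] at this
    omega
  exact (hb hji).trans_lt (hS j hjS)

end Sorted

end

theorem strict_complementarity_gap_group_norm {n l : ℕ}
    (G : Fin l → Finset (Fin n))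
    (hdisj : ∀ i j : Fin l, i ≠ j → Disjoint (G i) (G j))
    (hcover : ∀ m : Fin n, ∃ i : Fin l, m ∈ G i)
    (g : EuclideanSpace ℝ (Fin n) → EuclideanSpace ℝ (Fin n))
    (xs : EuclideanSpace ℝ (Fin n))
    (Ω : Set (EuclideanSpace ℝ (Fin n)))
    (hΩ : Ω = {x : EuclideanSpace ℝ (Fin n) |
      ∑ i : Fin l, Real.sqrt (∑ j ∈ G i, x j ^ 2) ≤ 1})
    -- group-wise `ℓ₂` norms of the gradient at `x⋆`
    (gn : Fin l → ℝ)
    (hgn : ∀ i : Fin l, gn i = Real.sqrt (∑ j ∈ G i, g xs j ^ 2))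
    -- the groups are ordered so that these norms are descending
    (hsort : ∀ i j : Fin l, i ≤ j → gn j ≤ gn i)
    -- `r⋆` is the number of groups in the support of `x⋆`
    (rstar : ℕ)
    (hr : rstar = (Finset.univ.filter fun i : Fin l => ∃ j ∈ G i, xs j ≠ 0).card)
    (h0 : 0 < rstar) (hrl : rstar < l)
    -- `x⋆ ∈ ∂Ω` and strict complementarity
    (hbd : xs ∈ frontier Ω)
    (hsc : -g xs ∈ intrinsicInterior ℝ
      {y : EuclideanSpace ℝ (Fin n) | ∀ x ∈ Ω, ⟪y, x⟫ ≤ ⟪y, xs⟫}) :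
    (∀ i : Fin l, (i : ℕ) < rstar → gn i = gn ⟨0, by omega⟩) ∧
      0 < gn ⟨rstar - 1, by omega⟩ - gn ⟨rstar, hrl⟩ := by
  have hball : {x : EuclideanSpace ℝ (Fin n) | ∑ i, √(∑ j ∈ G i, x j ^ 2) ≤ 1} =
      groupLassoBall G := by
    ext x
    simp [groupLassoBall, groupLassoNorm_eq_sum_sqrt]
  subst hΩ
  rw [hball] at hbd hsc
  have hpart : Pairwise (Disjoint on G) := fun i j => hdisj i j
  have hxs : groupLassoNorm G xs = 1 := frontier_le_subset_eq continuous_groupLassoNorm continuous_const hbd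
  have hgn_eq : ∀ i, gn i = ‖restrictTo (G i) (-g xs)‖ := fun i => by
    rw [hgn, map_neg, norm_neg, norm_restrictTo]
  have hanti : Antitone gn := fun i j => hsort i j
  have hle : ∀ i, gn i ≤ gn ⟨0, by omega⟩ := fun i => hanti (Fin.mk_le_mk.2 (Nat.zero_le i))
  have hmax : IsGreatest (Set.range fun i => ‖restrictTo (G i) (-g xs)‖) (gn ⟨0, by omega⟩) := by
    simp only [← hgn_eq]
    exact ⟨⟨_, rfl⟩, Set.forall_mem_range.2 hle⟩
  set S := univ.filter fun i => restrictTo (G i) xs ≠ 0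
  have hS : #S = rstar := by
    simp only [hr, S, ne_eq, restrictTo_eq_zero_iff, not_forall, exists_prop]
  have heq : ∀ i ∈ S, gn i = gn ⟨0, by omega⟩ := fun i hi => (hgn_eq i).trans <|
    norm_restrictTo_eq_of_restrictTo_ne_zero hpart hcover hxs (intrinsicInterior_subset hsc) hmax
      (mem_filter.1 hi).2
  have hlt : ∀ i ∉ S, gn i < gn ⟨0, by omega⟩ := fun i hi => (hgn_eq i).trans_lt <|
    norm_restrictTo_lt_of_restrictTo_eq_zero hpart hcover hxs hsc hmax
      (by simpa [S] using hi)
  refine ⟨fun i hi => hanti.eq_of_lt_card hle heq (hS ▸ hi), ?_⟩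
  rw [sub_pos, hanti.eq_of_lt_card hle heq (i := ⟨rstar - 1, by omega⟩) (by rw [hS]; exact Nat.sub_one_lt h0.ne')]
  exact hanti.lt_of_card_le hlt hS.le
end

section
/- Let Ω = {X ∈ S^n : X ⪰ 0, tr X = 1} be the spectrahedron and X⋆ ∈ ∂Ω with −∇f(X⋆) ∈ relint N_Ω(X⋆). Then the smallest r⋆ = rank(X⋆) eigenvalues of ∇f(X⋆) are all equal, the eigenspace of those eigenvalues equals range(X⋆), ⟨∇f(X⋆), X⋆⟩ = λ_{n−i+1}(∇f(X⋆)) for i = 1,…,r⋆, and δ := λ_{n−r⋆}(∇f(X⋆)) − λ_{n−r⋆+1}(∇f(X⋆)) > 0. -/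
/-!
The normal-cone condition says that `X⋆` minimises `X ↦ tr (G X)` over the spectrahedron, where
the minimum is `λ_min(G)`, attained at `u uᵀ` for a unit eigenvector `u`. So `tr ((G - λ_min) X⋆)`
vanishes although both factors are positive semidefinite, which forces `(G - λ_min) X⋆ = 0`:
`range X⋆` lies in the bottom eigenspace `E` of `G`. Conversely, for `0 ≠ q ∈ E ∩ ker X⋆` the
matrix `-G - q qᵀ` is still in the normal cone, so relative interiority lets `-G` move a little in
the direction `+ q qᵀ`; testing the cone inequality against `q qᵀ / |q|²` shows that this is
impossible. By a dimension count `E = range X⋆`, so `λ_min` has multiplicity exactly `r⋆`, which is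
what the assertions about the sorted eigenvalues say.
-/

open Matrix Unitary
open scoped ComplexOrder Topology

attribute [local instance] Matrix.frobeniusNormedAddCommGroup Matrix.normedSpace

section PosSemidef

variable {m 𝕜 : Type*} [Fintype m] [RCLike 𝕜] {P Q : Matrix m m 𝕜}

open scoped MatrixOrder in
lemma Matrix.PosSemidef.exists_eq_conjTranspose_mul_self (hP : P.PosSemidef) :
    ∃ B : Matrix m m 𝕜, P = Bᴴ * B := by
  classical
  obtain ⟨B, hB, -, hBB⟩ := CFC.exists_sqrt_of_isSelfAdjoint_of_quasispectrumRestricts hP.1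
    (QuasispectrumRestricts.nnreal_of_nonneg hP.nonneg)
  exact ⟨B, by rw [← hBB, ← star_eq_conjTranspose, hB.star_eq]⟩

lemma Matrix.PosSemidef.trace_mul_nonneg (hP : P.PosSemidef) (hQ : Q.PosSemidef) :
    0 ≤ (P * Q).trace := by
  obtain ⟨B, rfl⟩ := hP.exists_eq_conjTranspose_mul_self
  rw [Matrix.mul_assoc, trace_mul_comm]
  exact (hQ.mul_mul_conjTranspose_same B).trace_nonneg

lemma Matrix.PosSemidef.mul_eq_zero_of_trace_mul_eq_zero (hP : P.PosSemidef)
    (hQ : Q.PosSemidef) (h : (P * Q).trace = 0) : P * Q = 0 := by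
  obtain ⟨B, rfl⟩ := hP.exists_eq_conjTranspose_mul_self
  obtain ⟨C, rfl⟩ := hQ.exists_eq_conjTranspose_mul_self
  have hBCB : B * (Cᴴ * C) * Bᴴ = 0 := by
    rw [← (hQ.mul_mul_conjTranspose_same B).trace_eq_zero_iff, trace_mul_comm, ← h,
      Matrix.mul_assoc]
  have hCB : C * Bᴴ = 0 := conjTranspose_mul_self_eq_zero.mp <| by
    simpa only [conjTranspose_mul, conjTranspose_conjTranspose, Matrix.mul_assoc] using hBCB
  calc Bᴴ * B * (Cᴴ * C) = Bᴴ * (C * Bᴴ)ᴴ * C := by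
        simp only [conjTranspose_mul, conjTranspose_conjTranspose, Matrix.mul_assoc]
    _ = 0 := by rw [hCB, conjTranspose_zero, Matrix.mul_zero, Matrix.zero_mul]

end PosSemidef

namespace Matrix.IsHermitian

variable {m 𝕜 : Type*} [Fintype m] [DecidableEq m] [RCLike 𝕜] {A : Matrix m m 𝕜}
  (hA : A.IsHermitian) (μ : ℝ)

lemma sub_smul_one_eq : A - (μ : 𝕜) • 1 = conjStarAlgAut 𝕜 _ hA.eigenvectorUnitary
    (diagonal fun i ↦ ((hA.eigenvalues i - μ : ℝ) : 𝕜)) := by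
  conv_lhs => rw [hA.spectral_theorem]
  rw [← map_one (conjStarAlgAut 𝕜 _ hA.eigenvectorUnitary), ← map_smul, ← map_sub]
  congr 1
  ext i j
  by_cases h : i = j <;> simp [h, Algebra.algebraMap_eq_smul_one, sub_smul]

lemma posSemidef_sub_smul_one (hμ : ∀ i, μ ≤ hA.eigenvalues i) :
    (A - (μ : 𝕜) • 1).PosSemidef := by
  rw [hA.sub_smul_one_eq, conjStarAlgAut_apply]
  simpa [isUnit_coe.posSemidef_star_right_conjugate_iff, posSemidef_diagonal_iff] using hμ

lemma rank_sub_smul_one :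
    (A - (μ : 𝕜) • 1).rank = Fintype.card {i // hA.eigenvalues i ≠ μ} := by
  rw [hA.sub_smul_one_eq, conjStarAlgAut_apply, ← coe_star]
  simp [-isUnit_iff_ne_zero, -coe_star, rank_diagonal, sub_eq_zero]

lemma finrank_eigenspace :
    Module.finrank 𝕜 (Module.End.eigenspace A.mulVecLin (μ : 𝕜)) =
      Fintype.card {i // hA.eigenvalues i = μ} := by
  have hker := LinearMap.finrank_range_add_finrank_ker (A - (μ : 𝕜) • 1).mulVecLin
  have hcard : Fintype.card {i // hA.eigenvalues i ≠ μ} = _ := Fintype.card_subtype_compl _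
  have hlin : A.mulVecLin - (μ : 𝕜) • 1 = (A - (μ : 𝕜) • 1).mulVecLin := by
    refine LinearMap.ext fun v ↦ ?_
    simp
  change (A - (μ : 𝕜) • 1).rank + _ = _ at hker
  rw [hA.rank_sub_smul_one, Module.finrank_fintype_fun_eq_card] at hker
  rw [Module.End.eigenspace_def, hlin]
  have := Fintype.card_subtype_le fun i ↦ hA.eigenvalues i = μ
  omega

end Matrix.IsHermitian

lemma exists_pos_add_smul_sub_mem_of_mem_intrinsicInterior_s10 {V : Type*} [AddCommGroup V]
    [Module ℝ V] [TopologicalSpace V] [IsTopologicalAddGroup V] [ContinuousSMul ℝ V]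
    {s : Set V} {x y : V} (hx : x ∈ intrinsicInterior ℝ s) (hy : y ∈ s) :
    ∃ ε : ℝ, 0 < ε ∧ x + ε • (x - y) ∈ s := by
  obtain ⟨z, hz, rfl⟩ := hx
  have hdir : (z : V) - y ∈ (affineSpan ℝ s).direction :=
    AffineSubspace.vsub_mem_direction z.2 (subset_affineSpan ℝ s hy)
  let ray : ℝ → affineSpan ℝ s := fun t ↦ ⟨t • ((z : V) - y) +ᵥ (z : V),
    AffineSubspace.vadd_mem_of_mem_direction (Submodule.smul_mem _ t hdir) z.2⟩
  have hray : Continuous ray := Continuous.subtype_mk (by fun_prop) _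
  have hz0 : ray 0 = z := by ext; simp [ray]
  have hev : ∀ᶠ t in 𝓝[>] 0, ray t ∈ interior ((↑) ⁻¹' s) :=
    nhdsWithin_le_nhds <| hray.continuousAt.preimage_mem_nhds (hz0 ▸ isOpen_interior.mem_nhds hz)
  obtain ⟨ε, hεs, hε⟩ := (hev.and self_mem_nhdsWithin).exists
  refine ⟨ε, hε, ?_⟩
  simpa [ray, vadd_eq_add, add_comm] using interior_subset hεs

lemma LinearMap.range_eq_of_le_of_inf_ker_eq_bot {K V : Type*} [DivisionRing K]
    [AddCommGroup V] [Module K V] [FiniteDimensional K V] (f : V →ₗ[K] V) {E : Submodule K V}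
    (hle : range f ≤ E) (hE : E ⊓ ker f = ⊥) : range f = E := by
  refine Submodule.eq_of_le_of_finrank_le hle ?_
  have hsup := Submodule.finrank_sup_add_finrank_inf_eq E (ker f)
  have hrank := f.finrank_range_add_finrank_ker
  have hle' := Submodule.finrank_le (E ⊔ ker f)
  rw [hE, finrank_bot] at hsup
  omega

lemma Antitone.eq_iff_le_of_card_eq {α : Type*} [LinearOrder α] {n r : ℕ} {f : Fin n → α}
    (hf : Antitone f) {a : α} (ha : ∀ i, a ≤ f i) (hcard : Fintype.card {i // f i = a} = r)
    (i : Fin n) : f i = a ↔ n - r ≤ i := by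
  rw [Fintype.card_subtype] at hcard
  constructor
  · intro hi
    have hsub : Finset.Ici i ⊆ Finset.univ.filter (f · = a) := fun j hj ↦
      Finset.mem_filter.2 ⟨Finset.mem_univ j,
        le_antisymm (hi ▸ hf (Finset.mem_Ici.1 hj)) (ha j)⟩
    have := Finset.card_le_card hsub
    rw [Fin.card_Ici] at this
    omega
  · intro hi
    by_contra hne
    have hsub : Finset.univ.filter (f · = a) ⊆ Finset.Ioi i := fun j hj ↦ by
      refine Finset.mem_Ioi.2 (lt_of_not_ge fun hji ↦ hne ?_)
      exact le_antisymm ((Finset.mem_filter.1 hj).2 ▸ hf hji) (ha i)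
    have := Finset.card_le_card hsub
    rw [Fin.card_Ioi] at this
    omega

section Spectrahedron

def spectrahedron (m : Type*) [Fintype m] : Set (Matrix m m ℝ) :=
  {X | X.PosSemidef ∧ X.trace = 1}

variable {m : Type*} [Fintype m]

def symmNormalCone (Ω : Set (Matrix m m ℝ)) (X₀ : Matrix m m ℝ) : Set (Matrix m m ℝ) :=
  {Y | Y.IsSymm ∧ ∀ X ∈ Ω, (Y * (X - X₀)).trace ≤ 0}

variable {X₀ Y : Matrix m m ℝ}

lemma dotProduct_mulVec_le_of_mem_symmNormalCone
    (hY : Y ∈ symmNormalCone (spectrahedron m) X₀) (v : m → ℝ) :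
    v ⬝ᵥ (Y *ᵥ v) ≤ (v ⬝ᵥ v) * (Y * X₀).trace := by
  rcases eq_or_ne v 0 with rfl | hv
  · simp
  have hvv : 0 < v ⬝ᵥ v := by simpa using dotProduct_self_star_pos_iff.2 hv
  have hvv_psd : (vecMulVec v v).PosSemidef := by simpa using posSemidef_vecMulVec_self_star v
  have hX : (v ⬝ᵥ v)⁻¹ • vecMulVec v v ∈ spectrahedron m :=
    ⟨hvv_psd.smul (inv_nonneg.2 hvv.le), by simp [trace_smul, hvv.ne']⟩
  have := hY.2 _ hX
  rwa [Matrix.mul_sub, trace_sub, Matrix.mul_smul, trace_smul, mul_vecMulVec, trace_vecMulVec,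
    sub_nonpos, smul_eq_mul, inv_mul_le_iff₀ hvv, dotProduct_comm] at this

lemma sub_vecMulVec_mem_symmNormalCone (hY : Y ∈ symmNormalCone (spectrahedron m) X₀)
    {q : m → ℝ} (hq : X₀ *ᵥ q = 0) : Y - vecMulVec q q ∈ symmNormalCone (spectrahedron m) X₀ := by
  refine ⟨hY.1.sub (transpose_vecMulVec q q), fun X hX ↦ ?_⟩
  have hXq : 0 ≤ q ⬝ᵥ (X *ᵥ q) := by simpa using hX.1.dotProduct_mulVec_nonneg q
  have hYX := hY.2 X hX
  rw [Matrix.sub_mul, trace_sub, trace_mul_comm (vecMulVec q q), mul_vecMulVec, trace_vecMulVec,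
    sub_mulVec, hq, sub_zero, dotProduct_comm]
  linarith

variable {G : Matrix m m ℝ}

lemma eigenspace_inf_ker_eq_bot_of_neg_mem_intrinsicInterior
    (hsc : -G ∈ intrinsicInterior ℝ (symmNormalCone (spectrahedron m) X₀)) (hX₀ : X₀.trace = 1)
    {μ : ℝ} (hGX : G * X₀ = μ • X₀) :
    Module.End.eigenspace G.mulVecLin μ ⊓ LinearMap.ker X₀.mulVecLin = ⊥ := by
  refine (Submodule.eq_bot_iff _).2 fun q hq ↦ ?_
  obtain ⟨hGq, hXq⟩ := Submodule.mem_inf.1 hq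
  rw [Module.End.mem_eigenspace_iff, mulVecLin_apply] at hGq
  rw [LinearMap.mem_ker, mulVecLin_apply] at hXq
  by_contra hq0
  have hqq : 0 < q ⬝ᵥ q := by simpa using dotProduct_self_star_pos_iff.2 hq0
  obtain ⟨ε, hε, hmem⟩ := exists_pos_add_smul_sub_mem_of_mem_intrinsicInterior_s10 hsc
    (sub_vecMulVec_mem_symmNormalCone (intrinsicInterior_subset hsc) hXq)
  rw [sub_sub_cancel] at hmem
  have := dotProduct_mulVec_le_of_mem_symmNormalCone hmem q
  simp only [add_mulVec, neg_mulVec, hGq, smul_mulVec, vecMulVec_mulVec, op_smul_eq_smul,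
    Matrix.add_mul, Matrix.neg_mul, smul_mul, trace_add, trace_neg, trace_smul, hGX, hX₀,
    trace_mul_comm _ X₀, mul_vecMulVec, hXq, zero_vecMulVec, trace_zero, dotProduct_add,
    dotProduct_neg, dotProduct_smul, smul_eq_mul, mul_zero, mul_one, add_zero] at this
  nlinarith [mul_pos hε (mul_pos hqq hqq)]

lemma range_mulVecLin_eq_eigenspace_of_neg_mem_intrinsicInterior
    (hsc : -G ∈ intrinsicInterior ℝ (symmNormalCone (spectrahedron m) X₀)) (hX₀ : X₀.trace = 1)
    {μ : ℝ} (hGX : G * X₀ = μ • X₀) :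
    LinearMap.range X₀.mulVecLin = Module.End.eigenspace G.mulVecLin μ := by
  refine X₀.mulVecLin.range_eq_of_le_of_inf_ker_eq_bot ?_
    (eigenspace_inf_ker_eq_bot_of_neg_mem_intrinsicInterior hsc hX₀ hGX)
  rintro _ ⟨w, rfl⟩
  simp only [Module.End.mem_eigenspace_iff, mulVecLin_apply]
  rw [mulVec_mulVec, hGX, smul_mulVec]

variable [DecidableEq m]

lemma mul_eq_smul_of_neg_mem_symmNormalCone (hG : G.IsHermitian) (hX₀ : X₀ ∈ spectrahedron m)
    (hN : -G ∈ symmNormalCone (spectrahedron m) X₀) {k : m}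
    (hk : ∀ i, hG.eigenvalues k ≤ hG.eigenvalues i) :
    G * X₀ = hG.eigenvalues k • X₀ := by
  set μ := hG.eigenvalues k
  have hshift : (G - μ • 1).PosSemidef := by simpa using hG.posSemidef_sub_smul_one μ hk
  have htrace : ((G - μ • 1) * X₀).trace = (G * X₀).trace - μ := by
    rw [Matrix.sub_mul, trace_sub, smul_mul, Matrix.one_mul, trace_smul, hX₀.2, smul_eq_mul,
      mul_one]
  have hlow : μ ≤ (G * X₀).trace := by linarith [hshift.trace_mul_nonneg hX₀.1]
  have hup : (G * X₀).trace ≤ μ := by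
    set v : m → ℝ := WithLp.ofLp (hG.eigenvectorBasis k)
    have hv : 0 < v ⬝ᵥ v := by
      simpa using dotProduct_self_star_pos_iff.2
        ((WithLp.ofLp_eq_zero 2).ne.2 (hG.eigenvectorBasis.orthonormal.ne_zero k))
    have := dotProduct_mulVec_le_of_mem_symmNormalCone hN v
    rw [neg_mulVec, hG.mulVec_eigenvectorBasis, dotProduct_neg, dotProduct_smul, smul_eq_mul,
      Matrix.neg_mul, trace_neg] at this
    nlinarith
  have := hshift.mul_eq_zero_of_trace_mul_eq_zero hX₀.1 (by linarith)
  rwa [Matrix.sub_mul, smul_mul, Matrix.one_mul, sub_eq_zero] at this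

end Spectrahedron

/-- Spectrahedron strict complementarity: let `Ω = {X ⪰ 0, tr X = 1}`,
`X⋆ ∈ ∂Ω` (i.e. `r⋆ = rank X⋆ < n`) with `−∇f(X⋆)` in the relative interior of
the normal cone.  With `G = ∇f(X⋆)` symmetric and its eigenvalues sorted
descending via the permutation `τ`, the smallest `r⋆` eigenvalues of `G`
coincide, their eigenspace equals `range X⋆`, `⟨G, X⋆⟩ = λ_{n−i+1}(G)` for
`i = 1, …, r⋆`, and `δ = λ_{n−r⋆}(G) − λ_{n−r⋆+1}(G) > 0`. -/
theorem strict_complementarity_gap_spectrahedron {n : ℕ} (rstar : ℕ)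
    (Xs G : Matrix (Fin n) (Fin n) ℝ)
    (hXs : Xs.PosSemidef) (htr : Xs.trace = 1)
    (hGsymm : G.IsHermitian)
    (hr : rstar = Xs.rank) (h0 : 0 < rstar) (hrn : rstar < n)
    (Ω : Set (Matrix (Fin n) (Fin n) ℝ))
    (hΩ : Ω = {X : Matrix (Fin n) (Fin n) ℝ | X.PosSemidef ∧ X.trace = 1})
    -- `τ` sorts the eigenvalues of `G` in descending order
    (τ : Equiv.Perm (Fin n))
    (hsort : ∀ i j : Fin n, i ≤ j → hGsymm.eigenvalues (τ j) ≤ hGsymm.eigenvalues (τ i))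
    -- strict complementarity: `−G ∈ relint N_Ω(X⋆)` (normal cone within `S^n`,
    -- with the trace inner product)
    (hsc : -G ∈ intrinsicInterior ℝ
      {Y : Matrix (Fin n) (Fin n) ℝ | Y.IsSymm ∧ ∀ X ∈ Ω, (Y * (X - Xs)).trace ≤ 0}) :
    (∀ i : Fin n, n - rstar ≤ (i : ℕ) →
        hGsymm.eigenvalues (τ i) = hGsymm.eigenvalues (τ ⟨n - 1, by omega⟩)) ∧
    (∀ v : Fin n → ℝ,
        G *ᵥ v = hGsymm.eigenvalues (τ ⟨n - 1, by omega⟩) • v ↔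
          v ∈ LinearMap.range Xs.mulVecLin) ∧
    ((G * Xs).trace = hGsymm.eigenvalues (τ ⟨n - 1, by omega⟩)) ∧
    (0 < hGsymm.eigenvalues (τ ⟨n - rstar - 1, by omega⟩) -
        hGsymm.eigenvalues (τ ⟨n - rstar, by omega⟩)) := by
  subst hΩ
  set μ := hGsymm.eigenvalues (τ ⟨n - 1, by omega⟩)
  have hanti : Antitone (hGsymm.eigenvalues ∘ τ) := fun i j hij ↦ hsort i j hij
  have hmin : ∀ i, μ ≤ hGsymm.eigenvalues i := fun i ↦ by
    have hle : τ.symm i ≤ ⟨n - 1, by omega⟩ := Fin.le_iff_val_le_val.2 (by dsimp only; omega)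
    simpa using hanti hle
  have hGXs : G * Xs = μ • Xs :=
    mul_eq_smul_of_neg_mem_symmNormalCone hGsymm ⟨hXs, htr⟩ (intrinsicInterior_subset hsc) hmin
  have heig : LinearMap.range Xs.mulVecLin = Module.End.eigenspace G.mulVecLin μ :=
    range_mulVecLin_eq_eigenspace_of_neg_mem_intrinsicInterior hsc htr hGXs
  have hcard : Fintype.card {i // (hGsymm.eigenvalues ∘ τ) i = μ} = rstar := by
    have hdim := hGsymm.finrank_eigenspace μ
    rw [RCLike.ofReal_real_eq_id, id, ← heig] at hdim
    exact (Fintype.card_congr (τ.subtypeEquivOfSubtype (p := (hGsymm.eigenvalues · = μ)))).trans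
      (hdim.symm.trans hr.symm)
  have hlevel := hanti.eq_iff_le_of_card_eq (fun i ↦ hmin (τ i)) hcard
  have hbottom : hGsymm.eigenvalues (τ ⟨n - rstar, by omega⟩) = μ := (hlevel _).2 le_rfl
  have habove : hGsymm.eigenvalues (τ ⟨n - rstar - 1, by omega⟩) ≠ μ :=
    mt (hlevel _).1 (by simp only [not_le]; omega)
  refine ⟨fun i hi ↦ (hlevel i).2 hi, fun v ↦ ?_, ?_, ?_⟩
  · rw [← SetLike.mem_coe, heig, SetLike.mem_coe, Module.End.mem_eigenspace_iff, mulVecLin_apply]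
  · rw [hGXs, trace_smul, htr, smul_eq_mul, mul_one]
  · rw [hbottom, sub_pos]
    exact (hmin _).lt_of_ne' habove
end

section
/- Let X⋆ ∈ R^{n₁×n₂} lie on the boundary of the unit nuclear norm ball with ‖X⋆‖_nuc = 1 and rank r⋆, with SVD X⋆ = UΣVᵀ. If −∇f(X⋆) ∈ relint N(X⋆) where N(X⋆) is the normal cone of the nuclear norm ball at X⋆, then the top r⋆ singular values of ∇f(X⋆) are all equal, ⟨∇f(X⋆), X⋆⟩ = −σ_i(∇f(X⋆)) for i = 1,…,r⋆, and δ := σ_{r⋆}(∇f(X⋆)) − σ_{r⋆+1}(∇f(X⋆)) > 0. -/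
/-!
Write `−G = λ (U Vᵀ + W)`. The orthogonality relations give
`λ² • 1 − Gᵀ G = λ² • Qᵀ (1 − Wᵀ W) Q` with `Q = 1 − V Vᵀ` the projection onto `(range V)ᗮ`.
As `1 − Wᵀ W` is positive definite, this matrix is positive semidefinite with kernel `range V`,
of dimension `r⋆`. So every eigenvalue of `Gᵀ G` is at most `λ²` and exactly `r⋆` of them equal
`λ²`: the top `r⋆` singular values of `G` equal `λ` and the next one is strictly smaller.
Finally `⟨G, X⋆⟩ = −λ tr (diagonal d) = −λ`.
-/

open Matrix

namespace Antitone

variable {α : Type*} [PartialOrder α] [DecidableEq α] {n : ℕ} {f : Fin n → α} {c : α}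

theorem apply_eq_of_lt_card (hf : Antitone f) (hc : ∀ j, f j ≤ c) {i : Fin n}
    (hi : (i : ℕ) < Fintype.card {j // f j = c}) : f i = c := by
  by_contra hne
  have hsub : Finset.univ.filter (fun j => f j = c) ⊆ Finset.Iio i := by
    intro j hj
    rw [Finset.mem_filter] at hj
    by_contra hij
    exact hne (le_antisymm (hc i) (hj.2 ▸ hf (not_lt.mp (Finset.mem_Iio.not.mp hij))))
  have := Finset.card_le_card hsub
  rw [Fin.card_Iio, ← Fintype.card_subtype] at this
  omega

theorem apply_lt_of_card_le (hf : Antitone f) (hc : ∀ j, f j ≤ c) {i : Fin n}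
    (hi : Fintype.card {j // f j = c} ≤ i) : f i < c := by
  refine (hc i).lt_of_ne fun h => ?_
  have hsub : Finset.Iic i ⊆ Finset.univ.filter (fun j => f j = c) := fun j hj =>
    Finset.mem_filter.mpr
      ⟨Finset.mem_univ j, le_antisymm (hc j) (h ▸ hf (Finset.mem_Iic.mp hj))⟩
  have := Finset.card_le_card hsub
  rw [Fin.card_Iic, ← Fintype.card_subtype] at this
  omega

end Antitone

namespace Matrix

section Rank

variable {K : Type*} [Field K] {l m n k : Type*} [Fintype n]

theorem rank_eq_of_ker_mulVecLin_eq {A : Matrix l n K} {B : Matrix m n K}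
    (h : LinearMap.ker A.mulVecLin = LinearMap.ker B.mulVecLin) : A.rank = B.rank := by
  have hA := LinearMap.finrank_range_add_finrank_ker A.mulVecLin
  have hB := LinearMap.finrank_range_add_finrank_ker B.mulVecLin
  rw [h] at hA
  exact Nat.add_right_cancel (hA.trans hB.symm)

theorem rank_conjTranspose_mul_mul_of_posDef [Fintype m] [PartialOrder K] [StarRing K]
    {S : Matrix m m K} (hS : S.PosDef) (B : Matrix m n K) : (Bᴴ * S * B).rank = B.rank := by
  apply rank_eq_of_ker_mulVecLin_eq
  ext x
  simp only [LinearMap.mem_ker, mulVecLin_apply]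
  refine ⟨fun hx => ?_, fun hx => by rw [← mulVec_mulVec, hx, mulVec_zero]⟩
  by_contra hBx
  have hpos := hS.dotProduct_mulVec_pos hBx
  rw [star_mulVec, dotProduct_mulVec, vecMul_vecMul, ← dotProduct_mulVec, mulVec_mulVec, hx,
    dotProduct_zero] at hpos
  exact hpos.false

theorem rank_one_sub_mul_transpose_add_card [Fintype m] [Fintype k] [DecidableEq m]
    [DecidableEq k] {V : Matrix m k K} (hV : Vᵀ * V = 1) :
    (1 - V * Vᵀ).rank + Fintype.card k = Fintype.card m := by
  have hker : LinearMap.ker (1 - V * Vᵀ).mulVecLin = LinearMap.range V.mulVecLin := by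
    ext x
    simp only [LinearMap.mem_ker, LinearMap.mem_range, mulVecLin_apply]
    refine ⟨fun h => ⟨Vᵀ *ᵥ x, ?_⟩, ?_⟩
    · rw [sub_mulVec, one_mulVec, sub_eq_zero] at h
      rw [mulVec_mulVec, ← h]
    · rintro ⟨y, rfl⟩
      rw [mulVec_mulVec, Matrix.sub_mul, Matrix.mul_assoc, hV, Matrix.mul_one, Matrix.one_mul,
        sub_self, zero_mulVec]
  have hrankV : V.rank = Fintype.card k :=
    le_antisymm V.rank_le_card_width (by simpa [hV] using rank_mul_le_right Vᵀ V)
  have := LinearMap.finrank_range_add_finrank_ker (1 - V * Vᵀ).mulVecLin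
  rw [hker, Module.finrank_fintype_fun_eq_card] at this
  rwa [← hrankV]

end Rank

section Orthogonal

variable {R : Type*} [CommRing R] {m n k : Type*} [Fintype m] [Fintype k] [DecidableEq k]
  {U : Matrix m k R} {V : Matrix n k R} {W : Matrix m n R}

theorem transpose_mul_self_mul_transpose_add (hU : Uᵀ * U = 1) (hWU : Wᵀ * U = 0) :
    (U * Vᵀ + W)ᵀ * (U * Vᵀ + W) = V * Vᵀ + Wᵀ * W := by
  have hUW : Uᵀ * W = 0 := by simpa using congrArg transpose hWU
  simp only [transpose_add, transpose_mul, transpose_transpose, Matrix.add_mul, Matrix.mul_add,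
    Matrix.mul_assoc, ← Matrix.mul_assoc Uᵀ, ← Matrix.mul_assoc Wᵀ U, hU, hUW, hWU,
    Matrix.one_mul, Matrix.mul_zero, Matrix.zero_mul, add_zero, zero_add]

theorem one_sub_mul_transpose_add_transpose_mul_self [Fintype n] [DecidableEq n]
    (hV : Vᵀ * V = 1) (hWV : W * V = 0) :
    1 - (V * Vᵀ + Wᵀ * W) = (1 - V * Vᵀ)ᵀ * (1 - Wᵀ * W) * (1 - V * Vᵀ) := by
  have hVV : V * Vᵀ * (V * Vᵀ) = V * Vᵀ := by
    rw [Matrix.mul_assoc, ← Matrix.mul_assoc Vᵀ, hV, Matrix.one_mul]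
  have hWVV : Wᵀ * W * (V * Vᵀ) = 0 := by
    rw [Matrix.mul_assoc, ← Matrix.mul_assoc W, hWV, Matrix.zero_mul, Matrix.mul_zero]
  have hVVW : V * Vᵀ * (Wᵀ * W) = 0 := by
    rw [← Matrix.mul_assoc, Matrix.mul_assoc V, ← transpose_mul, hWV, transpose_zero,
      Matrix.mul_zero, Matrix.zero_mul]
  simp only [transpose_sub, transpose_one, transpose_mul, transpose_transpose, Matrix.sub_mul,
    Matrix.mul_sub, Matrix.one_mul, Matrix.mul_one, hVV, hWVV, hVVW, Matrix.zero_mul]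
  abel

theorem trace_transpose_mul_add_mul_diagonal_mul [Fintype n] (hU : Uᵀ * U = 1)
    (hV : Vᵀ * V = 1) (hWU : Wᵀ * U = 0) (d : k → R) :
    ((U * Vᵀ + W)ᵀ * (U * diagonal d * Vᵀ)).trace = ∑ i, d i := by
  have hprod : (U * Vᵀ + W)ᵀ * (U * diagonal d * Vᵀ) = V * (diagonal d * Vᵀ) := by
    simp only [transpose_add, transpose_mul, transpose_transpose, Matrix.add_mul,
      Matrix.mul_assoc, ← Matrix.mul_assoc Uᵀ U, ← Matrix.mul_assoc Wᵀ U, hU, hWU,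
      Matrix.one_mul, Matrix.zero_mul, add_zero]
  rw [hprod, trace_mul_comm, Matrix.mul_assoc, hV, Matrix.mul_one, trace_diagonal]

end Orthogonal

namespace IsHermitian

open scoped ComplexOrder

variable {𝕜 : Type*} [RCLike 𝕜] {n : Type*} [Fintype n] [DecidableEq n] {A : Matrix n n 𝕜}

theorem smul_one_sub_eq_conjStarAlgAut (hA : A.IsHermitian) (c : ℝ) :
    c • (1 : Matrix n n 𝕜) - A = Unitary.conjStarAlgAut 𝕜 _ hA.eigenvectorUnitary
      (diagonal (RCLike.ofReal ∘ fun i => c - hA.eigenvalues i)) := by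
  have hscalar : c • (1 : Matrix n n 𝕜) =
      Unitary.conjStarAlgAut 𝕜 _ hA.eigenvectorUnitary (c • 1) := by
    simp
  conv_lhs => rw [hA.spectral_theorem, hscalar, ← map_sub]
  congr 1
  ext i j
  rcases eq_or_ne i j with rfl | h
  · simp [RCLike.real_smul_eq_coe_mul]
  · simp [h]

theorem rank_smul_one_sub (hA : A.IsHermitian) (c : ℝ) :
    (c • (1 : Matrix n n 𝕜) - A).rank = Fintype.card {i // hA.eigenvalues i ≠ c} := by
  rw [hA.smul_one_sub_eq_conjStarAlgAut, Unitary.conjStarAlgAut_apply, ← Unitary.coe_star,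
    rank_mul_eq_left_of_isUnit_det _ _ (UnitaryGroup.det_isUnit _),
    rank_mul_eq_right_of_isUnit_det _ _ (UnitaryGroup.det_isUnit _), rank_diagonal]
  exact Fintype.card_congr (Equiv.subtypeEquivRight fun i => by simp [sub_eq_zero, ne_comm])

theorem posSemidef_smul_one_sub_iff (hA : A.IsHermitian) (c : ℝ) :
    (c • (1 : Matrix n n 𝕜) - A).PosSemidef ↔ ∀ i, hA.eigenvalues i ≤ c := by
  rw [hA.smul_one_sub_eq_conjStarAlgAut, Unitary.conjStarAlgAut_apply,
    (Unitary.isUnit_coe).posSemidef_star_right_conjugate_iff]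
  simp

end IsHermitian

section NormalCone

variable {m n k : Type*} [Fintype m] [Fintype n] [Fintype k] [DecidableEq n] [DecidableEq k]
  {U : Matrix m k ℝ} {V : Matrix n k ℝ} {W : Matrix m n ℝ} {lam : ℝ} {G : Matrix m n ℝ}

theorem sq_smul_one_sub_conjTranspose_mul_self (hU : Uᵀ * U = 1) (hV : Vᵀ * V = 1)
    (hWU : Wᵀ * U = 0) (hWV : W * V = 0) (hG : -G = lam • (U * Vᵀ + W)) :
    lam ^ 2 • 1 - Gᴴ * G = lam ^ 2 • ((1 - V * Vᵀ)ᴴ * (1 - Wᵀ * W) * (1 - V * Vᵀ)) := by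
  have hGram : Gᴴ * G = lam ^ 2 • (V * Vᵀ + Wᵀ * W) := by
    have hneg : Gᵀ * G = (-G)ᵀ * -G := by
      rw [transpose_neg, Matrix.neg_mul, Matrix.mul_neg, neg_neg]
    rw [conjTranspose_eq_transpose_of_trivial, hneg, hG, transpose_smul, Matrix.smul_mul,
      Matrix.mul_smul, smul_smul, transpose_mul_self_mul_transpose_add hU hWU, sq]
  rw [hGram, ← smul_sub, conjTranspose_eq_transpose_of_trivial,
    one_sub_mul_transpose_add_transpose_mul_self hV hWV]

variable (hU : Uᵀ * U = 1) (hV : Vᵀ * V = 1) (hWU : Wᵀ * U = 0) (hWV : W * V = 0)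
  (hS : (1 - Wᵀ * W).PosDef) (hG : -G = lam • (U * Vᵀ + W))
include hU hV hWU hWV hS hG

theorem eigenvalues_conjTranspose_mul_self_le_sq (j : n) :
    (isHermitian_conjTranspose_mul_self G).eigenvalues j ≤ lam ^ 2 := by
  refine ((isHermitian_conjTranspose_mul_self G).posSemidef_smul_one_sub_iff _).mp ?_ j
  rw [sq_smul_one_sub_conjTranspose_mul_self hU hV hWU hWV hG]
  exact (hS.posSemidef.conjTranspose_mul_mul_same _).smul (sq_nonneg lam)

theorem card_eigenvalues_conjTranspose_mul_self_eq_sq (hlam : lam ≠ 0) :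
    Fintype.card {j // (isHermitian_conjTranspose_mul_self G).eigenvalues j = lam ^ 2} =
      Fintype.card k := by
  have hrank := (isHermitian_conjTranspose_mul_self G).rank_smul_one_sub (lam ^ 2)
  rw [sq_smul_one_sub_conjTranspose_mul_self hU hV hWU hWV hG,
    rank_smul_of_mem_nonZeroDivisors _ (mem_nonZeroDivisors_of_ne_zero (pow_ne_zero 2 hlam)),
    rank_conjTranspose_mul_mul_of_posDef hS, Fintype.card_subtype_compl] at hrank
  have hQ := rank_one_sub_mul_transpose_add_card hV
  have hle := Fintype.card_subtype_le
    fun j => (isHermitian_conjTranspose_mul_self G).eigenvalues j = lam ^ 2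
  omega

end NormalCone

end Matrix

/-- Nuclear norm ball strict complementarity: let `X⋆ = U diag(d) Vᵀ` have
nuclear norm `1` and rank `r⋆`, on the boundary of the unit nuclear norm ball.
If `−∇f(X⋆) = λ(UVᵀ + W)` with `λ > 0`, `WᵀU = 0`, `WV = 0` and `‖W‖_op < 1`
(encoded as `I − WᵀW ≻ 0`), i.e. `−∇f(X⋆)` is in the relative interior of the
normal cone, then, with singular values `σᵢ(G)` of `G = ∇f(X⋆)` sorted
descending via `τ`, the top `r⋆` singular values of `G` coincide,
`⟨G, X⋆⟩ = −σᵢ(G)` for `i = 1, …, r⋆`, and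
`δ = σ_{r⋆}(G) − σ_{r⋆+1}(G) > 0`. -/
theorem strict_complementarity_gap_nuclear {n₁ n₂ rstar : ℕ}
    (G Xs : Matrix (Fin n₁) (Fin n₂) ℝ)
    (U : Matrix (Fin n₁) (Fin rstar) ℝ) (V : Matrix (Fin n₂) (Fin rstar) ℝ)
    (d : Fin rstar → ℝ)
    (hU : Uᵀ * U = 1) (hV : Vᵀ * V = 1)
    (hXs : Xs = U * Matrix.diagonal d * Vᵀ)
    (hnuc : ∑ i, d i = 1)
    (h0 : 0 < rstar) (hr2 : rstar < n₂)
    -- sorted singular values of `G`: `sg i = √(λ_{τ i}(Gᵀ G))`, descending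
    (τ : Equiv.Perm (Fin n₂)) (sg : Fin n₂ → ℝ)
    (hsg : ∀ i : Fin n₂,
      sg i = Real.sqrt ((Matrix.isHermitian_conjTranspose_mul_self G).eigenvalues (τ i)))
    (hsort : ∀ i j : Fin n₂, i ≤ j → sg j ≤ sg i)
    -- strict complementarity: `−G` is in the relative interior of the normal
    -- cone of the unit nuclear norm ball at `X⋆`
    (hsc : ∃ lam : ℝ, 0 < lam ∧ ∃ W : Matrix (Fin n₁) (Fin n₂) ℝ,
      Wᵀ * U = 0 ∧ W * V = 0 ∧ ((1 : Matrix (Fin n₂) (Fin n₂) ℝ) - Wᵀ * W).PosDef ∧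
      -G = lam • (U * Vᵀ + W)) :
    (∀ i : Fin n₂, (i : ℕ) < rstar → sg i = sg ⟨0, by omega⟩) ∧
    ((Gᵀ * Xs).trace = -(sg ⟨0, by omega⟩)) ∧
    (0 < sg ⟨rstar - 1, by omega⟩ - sg ⟨rstar, hr2⟩) := by
  obtain ⟨lam, hlam, W, hWU, hWV, hS, hG⟩ := hsc
  have hanti : Antitone sg := fun i j hij => hsort i j hij
  have hle : ∀ i, sg i ≤ lam := fun i => by
    rw [hsg i, Real.sqrt_le_left hlam.le]
    exact eigenvalues_conjTranspose_mul_self_le_sq hU hV hWU hWV hS hG _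
  have hcard : Fintype.card {i // sg i = lam} = rstar := by
    have hiff : ∀ i, sg i = lam ↔
        (isHermitian_conjTranspose_mul_self G).eigenvalues (τ i) = lam ^ 2 := fun i => by
      rw [hsg i, Real.sqrt_eq_iff_eq_sq (eigenvalues_conjTranspose_mul_self_nonneg G _) hlam.le]
    rw [Fintype.card_congr (τ.subtypeEquiv (q := fun j => _ = lam ^ 2) hiff),
      card_eigenvalues_conjTranspose_mul_self_eq_sq hU hV hWU hWV hS hG hlam.ne',
      Fintype.card_fin]
  have htop : ∀ i : Fin n₂, (i : ℕ) < rstar → sg i = lam :=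
    fun i hi => hanti.apply_eq_of_lt_card hle (hcard ▸ hi)
  have hsg0 : sg ⟨0, by omega⟩ = lam := htop _ h0
  refine ⟨fun i hi => (htop i hi).trans hsg0.symm, ?_, ?_⟩
  · have hGt : Gᵀ = -(lam • (U * Vᵀ + W))ᵀ := by rw [← hG, transpose_neg, neg_neg]
    rw [hGt, hXs, Matrix.neg_mul, transpose_smul, Matrix.smul_mul, trace_neg, trace_smul,
      trace_transpose_mul_add_mul_diagonal_mul hU hV hWU, hnuc, hsg0, smul_eq_mul, mul_one]
  · rw [htop _ (Nat.sub_lt h0 one_pos), sub_pos]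
    exact hanti.apply_lt_of_card_le hle (by simp [hcard])
end

section
/- If X̃ = (1/2)[[X₁, X],[Xᵀ, X₂]] ∈ S^{n₁+n₂} is positive semidefinite with tr X̃ = 1 (where X₁ ∈ S^{n₁}, X₂ ∈ S^{n₂}, X ∈ R^{n₁×n₂}), then the nuclear norm of the off-diagonal block satisfies ‖X‖_nuc ≤ 1. -/
/-!
Let `V` be an orthogonal matrix of eigenvectors of `XᵀX`, with eigenvalues `σᵢ²`, and put
`U = X V Σ⁻¹`. Then `‖X‖_nuc = tr (Uᵀ X V)`, and both `U` and `V` are partial isometries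
(`W Wᵀ W = W`). Pairing the positive semidefinite block matrix with the stacked matrix `[U; -V]`
gives `2 tr (Uᵀ X V) ≤ tr (Uᵀ X₁ U) + tr (Vᵀ X₂ V)`, and for a partial isometry `W` and `A ⪰ 0`
one has `tr (Wᵀ A W) ≤ tr A`, because `1 - W Wᵀ` is an orthogonal projection. Hence
`‖X‖_nuc ≤ (tr X₁ + tr X₂) / 2 = 1`.
-/

open Matrix

/-- Nuclear norm of a real matrix: the sum of its singular values
(`√` of the eigenvalues of `Aᵀ A`). -/
noncomputable def nuclearNorm {m n : ℕ} (A : Matrix (Fin m) (Fin n) ℝ) : ℝ :=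
  ∑ i, Real.sqrt ((Matrix.isHermitian_conjTranspose_mul_self A).eigenvalues i)

namespace Matrix

variable {m n k : Type*} [Fintype m] [Fintype n] [Fintype k]

theorem trace_fromBlocks {R : Type*} [AddCommMonoid R] (A : Matrix m m R) (B : Matrix m n R)
    (C : Matrix n m R) (D : Matrix n n R) :
    (fromBlocks A B C D).trace = A.trace + D.trace := by
  simp [trace, Fintype.sum_sum_type]

theorem PosSemidef.trace_transpose_mul_mul_le [DecidableEq m] {A : Matrix m m ℝ}
    (hA : A.PosSemidef) {U : Matrix m n ℝ} (hU : U * (Uᵀ * U) = U) :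
    (Uᵀ * A * U).trace ≤ A.trace := by
  have hP : U * Uᵀ * (U * Uᵀ) = U * Uᵀ := by
    rw [Matrix.mul_assoc, ← Matrix.mul_assoc Uᵀ, ← Matrix.mul_assoc, hU]
  set Q := 1 - U * Uᵀ with hQ
  have hQt : Qᵀ = Q := by simp [Q, transpose_sub]
  have hQQ : Q * Q = Q := by
    simp only [Q, sub_mul, mul_sub, one_mul, mul_one, hP]
    abel
  have hnonneg : 0 ≤ (Q * A * Qᵀ).trace := by
    simpa using (hA.mul_mul_conjTranspose_same Q).trace_nonneg
  have hQA : (Q * A * Qᵀ).trace = A.trace - (Uᵀ * A * U).trace := by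
    rw [trace_mul_cycle, hQt, hQQ, hQ, sub_mul, one_mul, trace_sub, trace_mul_cycle Uᵀ]
  linarith

theorem PosSemidef.two_mul_trace_transpose_mul_mul_le_add {A : Matrix m m ℝ} {B : Matrix m n ℝ}
    {D : Matrix n n ℝ} (h : (fromBlocks A B Bᵀ D).PosSemidef) (U : Matrix m k ℝ)
    (V : Matrix n k ℝ) :
    2 * (Uᵀ * B * V).trace ≤ (Uᵀ * A * U).trace + (Vᵀ * D * V).trace := by
  have hnonneg := (h.conjTranspose_mul_mul_same (fromRows U (-V))).trace_nonneg
  have hsymm : (Vᵀ * Bᵀ * U).trace = (Uᵀ * B * V).trace := by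
    rw [← trace_transpose]; simp [Matrix.mul_assoc]
  rw [Matrix.mul_assoc, conjTranspose_fromRows_eq_fromCols_conjTranspose, fromBlocks_mul_fromRows,
    fromCols_mul_fromRows] at hnonneg
  simp only [conjTranspose_eq_transpose_of_trivial, Matrix.mul_neg, Matrix.mul_add,
    transpose_neg, Matrix.neg_mul, neg_neg, trace_add, trace_neg] at hnonneg
  simp only [Matrix.mul_assoc] at hsymm ⊢
  linarith

end Matrix

theorem exists_trace_eq_nuclearNorm {m n : ℕ} (X : Matrix (Fin m) (Fin n) ℝ) :
    ∃ (U : Matrix (Fin m) (Fin n) ℝ) (V : Matrix (Fin n) (Fin n) ℝ),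
      U * (Uᵀ * U) = U ∧ V * (Vᵀ * V) = V ∧ (Uᵀ * X * V).trace = nuclearNorm X := by
  set hX := isHermitian_conjTranspose_mul_self X
  set V : Matrix (Fin n) (Fin n) ℝ := ↑hX.eigenvectorUnitary
  set σ : Fin n → ℝ := fun i => √(hX.eigenvalues i)
  have hVV : Vᵀ * V = 1 := Unitary.coe_star_mul_self hX.eigenvectorUnitary
  have hdiag : Vᵀ * (Xᵀ * X) * V = diagonal (σ * σ) := by
    have hσ : σ * σ = hX.eigenvalues := funext fun i =>
      Real.mul_self_sqrt ((posSemidef_conjTranspose_mul_self X).eigenvalues_nonneg i)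
    calc Vᵀ * (Xᵀ * X) * V = star V * (Xᴴ * X) * V := by
          rw [conjTranspose_eq_transpose_of_trivial]; rfl
      _ = diagonal (σ * σ) := by
          rw [← Unitary.conjStarAlgAut_star_apply (S := ℝ),
            hX.conjStarAlgAut_star_eigenvectorUnitary, hσ]
          rfl
  -- `σ⁻¹` is entrywise with `0⁻¹ = 0`: columns of `U` for zero singular values vanish.
  set U := X * V * diagonal σ⁻¹ with hU
  have hUXV : Uᵀ * X * V = diagonal σ := by
    calc Uᵀ * X * V = diagonal σ⁻¹ * (Vᵀ * (Xᵀ * X) * V) := by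
          simp only [U, transpose_mul, diagonal_transpose, Matrix.mul_assoc]
      _ = diagonal σ := by
          rw [hdiag, diagonal_mul_diagonal]
          congr 1 with i
          simp [← mul_assoc]
  have hUU : Uᵀ * U = diagonal (σ * σ⁻¹) := by
    rw [hU, ← Matrix.mul_assoc, ← Matrix.mul_assoc, ← hU, hUXV, diagonal_mul_diagonal]
    rfl
  refine ⟨U, V, ?_, by rw [hVV, Matrix.mul_one], by rw [hUXV, trace_diagonal]; rfl⟩
  rw [hUU, hU, Matrix.mul_assoc, diagonal_mul_diagonal]
  congr 2 with i
  simpa [mul_assoc] using mul_inv_mul_cancel (σ i)⁻¹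

/-- If `X̃ = (1/2) [[X₁, X], [Xᵀ, X₂]]` is positive semidefinite with trace `1`,
then the off-diagonal block satisfies `‖X‖_nuc ≤ 1`. -/
theorem offdiag_nuclear_le_one {n₁ n₂ : ℕ}
    (X₁ : Matrix (Fin n₁) (Fin n₁) ℝ) (X₂ : Matrix (Fin n₂) (Fin n₂) ℝ)
    (X : Matrix (Fin n₁) (Fin n₂) ℝ)
    (hpsd : (((1 : ℝ) / 2) • Matrix.fromBlocks X₁ X Xᵀ X₂).PosSemidef)
    (htr : (((1 : ℝ) / 2) • Matrix.fromBlocks X₁ X Xᵀ X₂).trace = 1) :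
    nuclearNorm X ≤ 1 := by
  have hM : (fromBlocks X₁ X Xᵀ X₂).PosSemidef := by
    simpa [smul_smul] using hpsd.smul (show (0 : ℝ) ≤ 2 by norm_num)
  have hX₁ : X₁.PosSemidef := hM.submatrix Sum.inl
  have hX₂ : X₂.PosSemidef := hM.submatrix Sum.inr
  have htr₁₂ : X₁.trace + X₂.trace = 2 := by
    rw [trace_smul, trace_fromBlocks, smul_eq_mul] at htr
    linarith
  obtain ⟨U, V, hU, hV, hnuc⟩ := exists_trace_eq_nuclearNorm X
  calc nuclearNorm X = (Uᵀ * X * V).trace := hnuc.symm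
    _ ≤ ((Uᵀ * X₁ * U).trace + (Vᵀ * X₂ * V).trace) / 2 := by
        linarith [hM.two_mul_trace_transpose_mul_mul_le_add U V]
    _ ≤ (X₁.trace + X₂.trace) / 2 := by
        gcongr
        exacts [hX₁.trace_transpose_mul_mul_le hU, hX₂.trace_transpose_mul_mul_le hV]
    _ = 1 := by rw [htr₁₂]; norm_num
end

section
/- Let h_{t+1} ≤ (1 − ξ + ξ²L/γ)·h_t + (ξ²L − ξδ/6)·c for some c ≥ 0 and all ξ ∈ [0,1], with L, γ, δ > 0. Then choosing ξ = min{γ/(2L), δ/(6L)} yields h_{t+1} ≤ (1 − min{γ/(4L), δ/(12L)})·h_t. -/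
/-! The single choice `ξ = min {γ/(2L), δ/(6L)}` handles both cases at once: `ξ ≤ γ/(2L)` makes
`ξ²L/γ ≤ ξ/2`, so the factor of `h_t` is at most `1 - ξ/2`, and `ξ ≤ δ/(6L)` makes the
coefficient `ξ²L - ξδ/6` of `c` nonpositive. -/

section

variable {ξ L γ δ : ℝ}

lemma sq_mul_div_le_half (hL : 0 < L) (hγ : 0 < γ) (hξ₀ : 0 ≤ ξ) (hξ : ξ ≤ γ / (2 * L)) :
    ξ ^ 2 * L / γ ≤ ξ / 2 := by
  rw [le_div_iff₀ (by positivity)] at hξ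
  rw [div_le_iff₀ hγ]
  nlinarith [mul_le_mul_of_nonneg_left hξ hξ₀]

lemma sq_mul_sub_mul_div_six_nonpos (hL : 0 < L) (hξ₀ : 0 ≤ ξ) (hξ : ξ ≤ δ / (6 * L)) :
    ξ ^ 2 * L - ξ * δ / 6 ≤ 0 := by
  rw [le_div_iff₀ (by positivity)] at hξ
  nlinarith [mul_le_mul_of_nonneg_left hξ hξ₀]

lemma le_one_sub_half_mul_of_le_step {ht ht1 c : ℝ} (hc : 0 ≤ c) (hht : 0 ≤ ht)
    (hL : 0 < L) (hγ : 0 < γ) (hξ₀ : 0 ≤ ξ) (hξγ : ξ ≤ γ / (2 * L)) (hξδ : ξ ≤ δ / (6 * L))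
    (hstep : ht1 ≤ (1 - ξ + ξ ^ 2 * L / γ) * ht + (ξ ^ 2 * L - ξ * δ / 6) * c) :
    ht1 ≤ (1 - ξ / 2) * ht := by
  have hfactor : 1 - ξ + ξ ^ 2 * L / γ ≤ 1 - ξ / 2 := by
    linarith [sq_mul_div_le_half hL hγ hξ₀ hξγ]
  calc ht1 ≤ (1 - ξ + ξ ^ 2 * L / γ) * ht + (ξ ^ 2 * L - ξ * δ / 6) * c := hstep
    _ ≤ (1 - ξ / 2) * ht + 0 := by
      gcongr
      exact mul_nonpos_of_nonpos_of_nonneg (sq_mul_sub_mul_div_six_nonpos hL hξ₀ hξδ) hc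
    _ = (1 - ξ / 2) * ht := add_zero _

lemma min_div_two_eq_min (L γ δ : ℝ) :
    min (γ / (2 * L)) (δ / (6 * L)) / 2 = min (γ / (4 * L)) (δ / (12 * L)) := by
  rw [← min_div_div_right zero_le_two]
  congr 1 <;> ring

end

/-- The recursion step yielding the linear rate: if
`h_{t+1} ≤ (1 − ξ + ξ²L/γ) h_t + (ξ²L − ξδ/6) c` for all `ξ ∈ [0,1]`, with
`c ≥ 0`, `h_t ≥ 0`, `0 < γ ≤ L` and `δ > 0`, then
`h_{t+1} ≤ (1 − min{γ/(4L), δ/(12L)}) h_t`. -/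
theorem linear_rate_recursion (ht ht1 c L γ δ : ℝ)
    (hc : 0 ≤ c) (hht : 0 ≤ ht) (hL : 0 < L) (hγ : 0 < γ) (hδ : 0 < δ)
    (hγL : γ ≤ L)
    (hrec : ∀ ξ ∈ Set.Icc (0 : ℝ) 1,
      ht1 ≤ (1 - ξ + ξ ^ 2 * L / γ) * ht + (ξ ^ 2 * L - ξ * δ / 6) * c) :
    ht1 ≤ (1 - min (γ / (4 * L)) (δ / (12 * L))) * ht := by
  set ξ := min (γ / (2 * L)) (δ / (6 * L))
  have hξ₀ : 0 ≤ ξ := le_min (by positivity) (by positivity)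
  have hξ₁ : ξ ≤ 1 := calc
    ξ ≤ γ / (2 * L) := min_le_left _ _
    _ ≤ 1 := by rw [div_le_one (by positivity)]; linarith
  rw [← min_div_two_eq_min]
  exact le_one_sub_half_mul_of_le_step hc hht hL hγ hξ₀ (min_le_left _ _) (min_le_right _ _)
    (hrec ξ ⟨hξ₀, hξ₁⟩)
end
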